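/- arXiv:2302.00542 — 4 statements merged into one kernel-verified Lean document; each statement's English description precedes it below -/
import Mathlib

section
/- Let K be a measurable function on ℝⁿ∖{0} with |K(x)| ≤ C/|x|ⁿ and with uniformly bounded truncated integrals: there is A < ∞ such that |∫_{r<|x|<R} K(x) dx| ≤ A for all 0 < r < R. Let η : ℝⁿ → ℂ satisfy ∫_{0<|x|<1} |η(x)−1|/|x|ⁿ dx + ∫_{|x|≥1} |η(x)|/|x|ⁿ dx < ∞. Then there exists A' < ∞ such that |∫_{r<|y|<R} K(y)η(y) dy| ≤ A' for all 0 < r < R. -/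
open MeasureTheory Metric Real Set

private lemma aux_dom {α : Type*} [MeasurableSpace α] {μ : Measure α}
    {f : α → ℂ} {g : α → ℝ} {T D : Set α}
    (hT : MeasurableSet T) (hTD : T ⊆ D)
    (hf : AEStronglyMeasurable f (μ.restrict T))
    (hg : IntegrableOn g D μ) (hg0 : ∀ x, 0 ≤ g x)
    (hbound : ∀ x ∈ T, ‖f x‖ ≤ g x) :
    IntegrableOn f T μ ∧ ‖∫ x in T, f x ∂μ‖ ≤ ∫ x in D, g x ∂μ := by
  have hgT : IntegrableOn g T μ := hg.mono_set hTD
  have hint : IntegrableOn f T μ :=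
    Integrable.mono' hgT hf ((ae_restrict_iff' hT).2 (Filter.Eventually.of_forall hbound))
  refine ⟨hint, ?_⟩
  calc ‖∫ x in T, f x ∂μ‖ ≤ ∫ x in T, ‖f x‖ ∂μ := norm_integral_le_integral_norm _
    _ ≤ ∫ x in T, g x ∂μ := setIntegral_mono_on hint.norm hgT hT hbound
    _ ≤ ∫ x in D, g x ∂μ :=
        setIntegral_mono_set hg (Filter.Eventually.of_forall hg0)
          (HasSubset.Subset.eventuallyLE hTD)

set_option maxHeartbeats 2000000 in
/-- uniform boundedness of the truncated integrals of the localized kernel Kη. -/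
theorem truncated_integrals_bounded (n : ℕ) (C A : ℝ)
    (K η : EuclideanSpace ℝ (Fin n) → ℂ) (hKmeas : Measurable K) (hηmeas : Measurable η)
    (hKsize : ∀ x : EuclideanSpace ℝ (Fin n), x ≠ 0 → ‖K x‖ ≤ C / ‖x‖ ^ n)
    (hKcanc : ∀ r R : ℝ, 0 < r → r < R →
      ‖∫ x in {x : EuclideanSpace ℝ (Fin n) | r < ‖x‖ ∧ ‖x‖ < R}, K x‖ ≤ A)
    (hη0 : IntegrableOn (fun x => ‖η x - 1‖ / ‖x‖ ^ n)
      {x : EuclideanSpace ℝ (Fin n) | 0 < ‖x‖ ∧ ‖x‖ < 1} volume)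
    (hηtail : IntegrableOn (fun x => ‖η x‖ / ‖x‖ ^ n)
      {x : EuclideanSpace ℝ (Fin n) | 1 ≤ ‖x‖} volume) :
    ∃ A' : ℝ, ∀ r R : ℝ, 0 < r → r < R →
      ‖∫ y in {y : EuclideanSpace ℝ (Fin n) | r < ‖y‖ ∧ ‖y‖ < R}, K y * η y‖ ≤ A' := by
  classical
  have hSmeas : ∀ a b : ℝ, MeasurableSet {x : EuclideanSpace ℝ (Fin n) | a < ‖x‖ ∧ ‖x‖ < b} := fun a b =>
    measurable_norm measurableSet_Ioo
  have hTmeas : ∀ b : ℝ, MeasurableSet {x : EuclideanSpace ℝ (Fin n) | 1 ≤ ‖x‖ ∧ ‖x‖ < b} := fun b =>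
    measurable_norm measurableSet_Ico
  have hD0meas : MeasurableSet {x : EuclideanSpace ℝ (Fin n) | 0 < ‖x‖ ∧ ‖x‖ < 1} := hSmeas 0 1
  have hDtmeas : MeasurableSet {x : EuclideanSpace ℝ (Fin n) | 1 ≤ ‖x‖} := measurable_norm measurableSet_Ici
  set M0 : ℝ := ∫ x in {x : EuclideanSpace ℝ (Fin n) | 0 < ‖x‖ ∧ ‖x‖ < 1}, |C| * (‖η x - 1‖ / ‖x‖ ^ n) with hM0
  set Mt : ℝ := ∫ x in {x : EuclideanSpace ℝ (Fin n) | 1 ≤ ‖x‖}, |C| * (‖η x‖ / ‖x‖ ^ n) with hMt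
  have hg0nn : ∀ x : EuclideanSpace ℝ (Fin n), 0 ≤ |C| * (‖η x - 1‖ / ‖x‖ ^ n) := fun x =>
    mul_nonneg (abs_nonneg _) (div_nonneg (norm_nonneg _) (pow_nonneg (norm_nonneg _) n))
  have hgtnn : ∀ x : EuclideanSpace ℝ (Fin n), 0 ≤ |C| * (‖η x‖ / ‖x‖ ^ n) := fun x =>
    mul_nonneg (abs_nonneg _) (div_nonneg (norm_nonneg _) (pow_nonneg (norm_nonneg _) n))
  have hM0nn : 0 ≤ M0 := setIntegral_nonneg hD0meas fun x _ => hg0nn x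
  have hMtnn : 0 ≤ Mt := setIntegral_nonneg hDtmeas fun x _ => hgtnn x
  have hg0int : IntegrableOn (fun x : EuclideanSpace ℝ (Fin n) => |C| * (‖η x - 1‖ / ‖x‖ ^ n))
      {x : EuclideanSpace ℝ (Fin n) | 0 < ‖x‖ ∧ ‖x‖ < 1} volume := hη0.const_mul _
  have hgtint : IntegrableOn (fun x : EuclideanSpace ℝ (Fin n) => |C| * (‖η x‖ / ‖x‖ ^ n))
      {x : EuclideanSpace ℝ (Fin n) | 1 ≤ ‖x‖} volume := hηtail.const_mul _
  have hKsize' : ∀ x : EuclideanSpace ℝ (Fin n), x ≠ 0 → ‖K x‖ ≤ |C| / ‖x‖ ^ n := fun x hx =>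
    (hKsize x hx).trans
      ((div_le_div_iff_of_pos_right (pow_pos (norm_pos_iff.2 hx) n)).2 (le_abs_self C))
  -- near-zero piece
  have hnear : ∀ T : Set (EuclideanSpace ℝ (Fin n)), MeasurableSet T → T ⊆ {x : EuclideanSpace ℝ (Fin n) | 0 < ‖x‖ ∧ ‖x‖ < 1} →
      IntegrableOn (fun x => K x * (η x - 1)) T volume ∧
      ‖∫ x in T, K x * (η x - 1)‖ ≤ M0 := by
    intro T hT hTD
    refine aux_dom hT hTD
      (hKmeas.mul (hηmeas.sub measurable_const)).aestronglyMeasurable hg0int hg0nn ?_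
    intro x hx
    have hx0 : x ≠ 0 := norm_pos_iff.1 (hTD hx).1
    calc ‖K x * (η x - 1)‖ = ‖K x‖ * ‖η x - 1‖ := norm_mul _ _
      _ ≤ (|C| / ‖x‖ ^ n) * ‖η x - 1‖ :=
          mul_le_mul_of_nonneg_right (hKsize' x hx0) (norm_nonneg _)
      _ = |C| * (‖η x - 1‖ / ‖x‖ ^ n) := by ring
  -- tail piece
  have htail : ∀ T : Set (EuclideanSpace ℝ (Fin n)), MeasurableSet T → T ⊆ {x : EuclideanSpace ℝ (Fin n) | 1 ≤ ‖x‖} →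
      IntegrableOn (fun x => K x * η x) T volume ∧
      ‖∫ x in T, K x * η x‖ ≤ Mt := by
    intro T hT hTD
    refine aux_dom hT hTD (hKmeas.mul hηmeas).aestronglyMeasurable hgtint hgtnn ?_
    intro x hx
    have hx0 : x ≠ 0 := norm_pos_iff.1 (lt_of_lt_of_le one_pos (hTD hx))
    calc ‖K x * η x‖ = ‖K x‖ * ‖η x‖ := norm_mul _ _
      _ ≤ (|C| / ‖x‖ ^ n) * ‖η x‖ :=
          mul_le_mul_of_nonneg_right (hKsize' x hx0) (norm_nonneg _)
      _ = |C| * (‖η x‖ / ‖x‖ ^ n) := by ring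
  -- K is integrable on annuli
  have hKint : ∀ r b : ℝ, 0 < r → IntegrableOn K {x : EuclideanSpace ℝ (Fin n) | r < ‖x‖ ∧ ‖x‖ < b} volume := by
    intro r b hr
    have hfin : volume {x : EuclideanSpace ℝ (Fin n) | r < ‖x‖ ∧ ‖x‖ < b} < ⊤ := by
      refine lt_of_le_of_lt (measure_mono ?_) (measure_ball_lt_top (x := (0 : EuclideanSpace ℝ (Fin n))) (r := b))
      intro x hx
      simpa [mem_ball_zero_iff] using hx.2
    have hrn : (0:ℝ) < r ^ n := pow_pos hr n
    refine (aux_dom (g := fun _ => |C| / r ^ n) (hSmeas r b) (subset_refl _)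
      hKmeas.aestronglyMeasurable (integrableOn_const hfin.ne)
      (fun _ => div_nonneg (abs_nonneg C) hrn.le) ?_).1
    intro x hx
    have hx0 : x ≠ 0 := norm_pos_iff.1 (hr.trans hx.1)
    refine (hKsize' x hx0).trans ?_
    exact div_le_div_of_nonneg_left (abs_nonneg _) hrn (pow_le_pow_left₀ hr.le hx.1.le n)
  -- main bound for annuli inside the unit ball
  have hmain0 : ∀ r b : ℝ, 0 < r → r < b → b ≤ 1 →
      IntegrableOn (fun x => K x * η x) {x : EuclideanSpace ℝ (Fin n) | r < ‖x‖ ∧ ‖x‖ < b} volume ∧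
      ‖∫ y in {x : EuclideanSpace ℝ (Fin n) | r < ‖x‖ ∧ ‖x‖ < b}, K y * η y‖ ≤ A + M0 := by
    intro r b hr hrb hb1
    set T := {x : EuclideanSpace ℝ (Fin n) | r < ‖x‖ ∧ ‖x‖ < b} with hT
    have hTD : T ⊆ {x : EuclideanSpace ℝ (Fin n) | 0 < ‖x‖ ∧ ‖x‖ < 1} :=
      fun x hx => ⟨hr.trans hx.1, lt_of_lt_of_le hx.2 hb1⟩
    have h1 := hnear T (hSmeas r b) hTD
    have h2 := hKint r b hr
    have heq : ∫ y in T, K y * η y = (∫ y in T, K y) + ∫ y in T, K y * (η y - 1) := by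
      rw [← integral_add h2 h1.1]
      exact integral_congr_ae (Filter.Eventually.of_forall fun x => by ring)
    constructor
    · exact (h2.add h1.1).congr (Filter.Eventually.of_forall fun x => by
        simp only [Pi.add_apply]; ring)
    · rw [heq]
      exact (norm_add_le _ _).trans (add_le_add (hKcanc r b hr hrb) h1.2)
  refine ⟨|A| + M0 + Mt, ?_⟩
  intro r R hr hrR
  by_cases hR1 : R ≤ 1
  · have h := hmain0 r R hr hrR hR1
    have := le_abs_self A
    linarith [h.2]
  · push_neg at hR1
    by_cases hr1 : 1 ≤ r
    · have hTD : {y : EuclideanSpace ℝ (Fin n) | r < ‖y‖ ∧ ‖y‖ < R} ⊆ {x : EuclideanSpace ℝ (Fin n) | 1 ≤ ‖x‖} :=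
        fun x hx => hr1.trans hx.1.le
      have h := htail _ (hSmeas r R) hTD
      have := abs_nonneg A
      linarith [h.2]
    · push_neg at hr1
      set T1 := {x : EuclideanSpace ℝ (Fin n) | r < ‖x‖ ∧ ‖x‖ < 1} with hT1
      set T2 := {x : EuclideanSpace ℝ (Fin n) | 1 ≤ ‖x‖ ∧ ‖x‖ < R} with hT2
      have hUn : {y : EuclideanSpace ℝ (Fin n) | r < ‖y‖ ∧ ‖y‖ < R} = T1 ∪ T2 := by
        ext x
        simp only [hT1, hT2, mem_setOf_eq, mem_union]
        constructor
        · rintro ⟨h1, h2⟩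
          rcases lt_or_ge ‖x‖ 1 with h | h
          · exact Or.inl ⟨h1, h⟩
          · exact Or.inr ⟨h, h2⟩
        · rintro (⟨h1, h2⟩ | ⟨h1, h2⟩)
          · exact ⟨h1, h2.trans hR1⟩
          · exact ⟨hr1.trans_le h1, h2⟩
      have hdisj : Disjoint T1 T2 := by
        rw [Set.disjoint_left]
        rintro x ⟨_, h2⟩ ⟨h3, _⟩
        exact absurd h3 (not_le.2 h2)
      have h1 := hmain0 r 1 hr hr1 le_rfl
      have h2 := htail T2 (hTmeas R) (fun x hx => hx.1)
      rw [hUn, setIntegral_union hdisj (hTmeas R) h1.1 h2.1]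
      have hadd := norm_add_le (∫ y in T1, K y * η y) (∫ y in T2, K y * η y)
      have := le_abs_self A
      linarith [h1.2, h2.2]
end

section
/- Suppose A is an approximate h¹_b atom supported in a ball B(x₀,r) with r < 1 (so ‖A‖_{L²} ≤ |B(x₀,r)|^{-1/2}, |∫A| ≤ [log(1+r^{-1})]^{-2}, and |∫A(b−b_{B(x₀,r)})| ≤ C_b/log(1+r^{-1}) with C_b = ‖b‖_{bmo,2}). Then A can be written as a finite sum A = Σ_{j=0}^{k+1} λ_j a_j where each a_j is an approximate h¹_b atom supported in a ball B_j, each a_j with r(B_j) < 1 has ∫ a_j = 0, and Σ_j |λ_j| ≤ C_n for a constant depending only on n. -/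
open MeasureTheory Metric Real Set

/-- The constant `c_B` of nonhomogeneous BMO. -/
noncomputable def cB (n : ℕ) (b : EuclideanSpace ℝ (Fin n) → ℝ)
    (x₀ : EuclideanSpace ℝ (Fin n)) (r : ℝ) : ℝ :=
  if r < 1 then ⨍ x in Metric.ball x₀ r, b x else 0

/-- An approximate `h¹_b` atom relative to the ball `B(x₀,r)`: supported in the ball,
with `L²` size `|B|^{-1/2}`, integral bounded by `[log(1+r⁻¹)]⁻²` and cancellation
against `b` bounded by `C_b/log(1+r⁻¹)`. -/
def IsApproxAtom (n : ℕ) (b : EuclideanSpace ℝ (Fin n) → ℝ) (Cb : ℝ)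
    (a : EuclideanSpace ℝ (Fin n) → ℝ) (x₀ : EuclideanSpace ℝ (Fin n)) (r : ℝ) : Prop :=
  0 < r ∧ Function.support a ⊆ Metric.ball x₀ r ∧ Integrable a volume ∧
    (∫ x, (a x) ^ 2) ≤ ((volume (Metric.ball x₀ r)).toReal)⁻¹ ∧
    |∫ x, a x| ≤ ((Real.log (1 + r⁻¹))⁻¹) ^ 2 ∧
    |∫ x, a x * (b x - cB n b x₀ r)| ≤ Cb / Real.log (1 + r⁻¹)


lemma not_integrable_add {α : Type*} [MeasureSpace α] {f g : α → ℝ}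
    (hf : ¬ Integrable f volume) (hg : Integrable g volume) :
    ¬ Integrable (fun x => f x + g x) volume := fun h => hf <| by
  have := h.sub hg
  exact this.congr (Filter.Eventually.of_forall (fun x => by simp [Pi.sub_apply]))

lemma not_integrable_const_mul {α : Type*} [MeasureSpace α] {f : α → ℝ} {c : ℝ}
    (hf : ¬ Integrable f volume) (hc : c ≠ 0) :
    ¬ Integrable (fun x => c * f x) volume := fun h => hf <| by
  have := h.const_mul c⁻¹
  simpa [← mul_assoc, inv_mul_cancel₀ hc] using this

lemma sum_range_two_mul (m : ℕ) (f : ℕ → ℝ) :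
    ∑ i ∈ Finset.range (2*m), f i = ∑ j ∈ Finset.range m, (f (2*j) + f (2*j+1)) := by
  induction m with
  | zero => simp
  | succ p ih =>
      have h2 : 2*(p+1) = (2*p+1)+1 := by ring
      rw [h2, Finset.sum_range_succ, Finset.sum_range_succ, Finset.sum_range_succ, ih]
      ring

lemma volR_pos {n : ℕ} (x : EuclideanSpace ℝ (Fin n)) {ρ : ℝ} (h : 0 < ρ) :
    0 < (volume (ball x ρ)).toReal :=
  ENNReal.toReal_pos (measure_ball_pos volume x h).ne' measure_ball_lt_top.ne

lemma ball_doubling {n : ℕ} (x : EuclideanSpace ℝ (Fin n)) {ρ ρ' : ℝ}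
    (h0 : 0 < ρ) (h1 : 0 < ρ') (h : ρ' ≤ 2*ρ) :
    (volume (ball x ρ')).toReal ≤ 2^n * (volume (ball x ρ)).toReal := by
  cases n with
  | zero =>
      have hball : ∀ s : ℝ, 0 < s → ball x s = Set.univ := by
        intro s hs
        ext y
        simp [mem_ball, Subsingleton.elim y x, hs]
      rw [hball _ h0, hball _ h1]
      simp
  | succ m =>
      have h2 : volume (ball x ρ') ≤ volume (ball x (2*ρ)) := measure_mono (ball_subset_ball h)
      have e1 : volume (ball x (2*ρ))
          = ENNReal.ofReal ((2*ρ)^(m+1)) * volume (ball (0 : EuclideanSpace ℝ (Fin (m+1))) 1) := by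
        rw [Measure.addHaar_ball volume x (by positivity), finrank_euclideanSpace_fin]
      have e2 : volume (ball x ρ)
          = ENNReal.ofReal (ρ^(m+1)) * volume (ball (0 : EuclideanSpace ℝ (Fin (m+1))) 1) := by
        rw [Measure.addHaar_ball volume x h0.le, finrank_euclideanSpace_fin]
      have e3 : volume (ball x (2*ρ)) = ENNReal.ofReal (2^(m+1)) * volume (ball x ρ) := by
        rw [e1, e2, ← mul_assoc, ← ENNReal.ofReal_mul (by positivity), mul_pow]
      have hfin : volume (ball x ρ) ≠ ⊤ := measure_ball_lt_top.ne
      have := ENNReal.toReal_mono (by finiteness) (le_trans h2 (le_of_eq e3))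
      rw [ENNReal.toReal_mul, ENNReal.toReal_ofReal (by positivity)] at this
      exact this


/-- normalized indicator of a ball -/
noncomputable def npsi {n : ℕ} (x₀ : EuclideanSpace ℝ (Fin n)) (ρ : ℝ) :
    EuclideanSpace ℝ (Fin n) → ℝ :=
  fun x => ((volume (ball x₀ ρ)).toReal)⁻¹ * (ball x₀ ρ).indicator (fun _ => (1:ℝ)) x

section npsi
variable {n : ℕ} (x₀ : EuclideanSpace ℝ (Fin n)) {ρ : ℝ} (hρ : 0 < ρ)

lemma npsi_support : Function.support (npsi x₀ ρ) ⊆ ball x₀ ρ := by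
  intro x hx
  by_contra hxb
  simp [npsi, Set.indicator_of_notMem hxb] at hx

lemma npsi_eq_zero {x : EuclideanSpace ℝ (Fin n)} (hx : x ∉ ball x₀ ρ) : npsi x₀ ρ x = 0 := by
  simp [npsi, Set.indicator_of_notMem hx]

lemma npsi_abs_le (x : EuclideanSpace ℝ (Fin n)) :
    |npsi x₀ ρ x| ≤ ((volume (ball x₀ ρ)).toReal)⁻¹ := by
  by_cases hx : x ∈ ball x₀ ρ
  · simp [npsi, Set.indicator_of_mem hx, abs_of_nonneg, ENNReal.toReal_nonneg, inv_nonneg]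
  · simp [npsi, Set.indicator_of_notMem hx, inv_nonneg, ENNReal.toReal_nonneg]

lemma integrable_npsi : Integrable (npsi x₀ ρ) volume := by
  refine Integrable.const_mul ?_ _
  exact (integrableOn_const measure_ball_lt_top.ne).integrable_indicator measurableSet_ball

include hρ

lemma integral_npsi : ∫ x, npsi x₀ ρ x = 1 := by
  have hV := volR_pos x₀ hρ
  simp only [npsi]
  rw [integral_const_mul, integral_indicator measurableSet_ball]
  simp [setIntegral_const, measureReal_def, inv_mul_cancel₀ hV.ne']

lemma integral_npsi_sq : ∫ x, (npsi x₀ ρ x)^2 = ((volume (ball x₀ ρ)).toReal)⁻¹ := by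
  have hV := volR_pos x₀ hρ
  have hpt : (fun x => (npsi x₀ ρ x)^2)
      = fun x => ((volume (ball x₀ ρ)).toReal)⁻¹ * npsi x₀ ρ x := by
    funext x
    by_cases hx : x ∈ ball x₀ ρ
    · simp [npsi, Set.indicator_of_mem hx]; ring
    · simp [npsi, Set.indicator_of_notMem hx]
  rw [hpt, integral_const_mul, integral_npsi x₀ hρ, mul_one]

omit hρ in
lemma npsi_mul (g : EuclideanSpace ℝ (Fin n) → ℝ) :
    (fun x => npsi x₀ ρ x * g x)
      = fun x => ((volume (ball x₀ ρ)).toReal)⁻¹ * (ball x₀ ρ).indicator g x := by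
  funext x
  by_cases hx : x ∈ ball x₀ ρ
  · simp [npsi, Set.indicator_of_mem hx]
  · simp [npsi, Set.indicator_of_notMem hx]

omit hρ in
lemma integrable_npsi_mul (g : EuclideanSpace ℝ (Fin n) → ℝ)
    (hg : IntegrableOn g (ball x₀ ρ) volume) :
    Integrable (fun x => npsi x₀ ρ x * g x) volume := by
  rw [npsi_mul]
  exact (hg.integrable_indicator measurableSet_ball).const_mul _

omit hρ in
lemma integral_npsi_mul (g : EuclideanSpace ℝ (Fin n) → ℝ) :
    ∫ x, npsi x₀ ρ x * g x
      = ((volume (ball x₀ ρ)).toReal)⁻¹ * ∫ x in ball x₀ ρ, g x := by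
  rw [npsi_mul, integral_const_mul, integral_indicator measurableSet_ball]

end npsi


/-- Cauchy–Schwarz-type bound via AM-GM. -/
lemma setIntegral_abs_le_of_sq {n : ℕ} {s : Set (EuclideanSpace ℝ (Fin n))}
    (hs : MeasurableSet s) (hfin : volume s ≠ ⊤) {f : EuclideanSpace ℝ (Fin n) → ℝ}
    (hf1 : IntegrableOn f s volume)
    (hf2 : IntegrableOn (fun x => (f x)^2) s volume)
    {D : ℝ} (hD : 0 ≤ D) (h : ∫ x in s, (f x)^2 ≤ (volume s).toReal * D^2) :
    ∫ x in s, |f x| ≤ (volume s).toReal * D := by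
  rcases hD.eq_or_lt with hD0 | hD0
  · -- D = 0 : f = 0 a.e. on s
    subst hD0
    have h0 : ∫ x in s, (f x)^2 = 0 := by
      refine le_antisymm (by simpa using h) (integral_nonneg (fun x => sq_nonneg _))
    have hae : (fun x => (f x)^2) =ᵐ[volume.restrict s] 0 := by
      have := (integral_eq_zero_iff_of_nonneg_ae
        (Filter.Eventually.of_forall (fun x => sq_nonneg (f x))) hf2).1 h0
      exact this
    have hae' : (fun x => |f x|) =ᵐ[volume.restrict s] 0 := by
      filter_upwards [hae] with x hx
      have : f x = 0 := by
        have := hx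
        simp only [Pi.zero_apply] at this
        exact pow_eq_zero_iff (n := 2) (by norm_num) |>.1 this
      simp [this]
    rw [integral_congr_ae hae']
    simp
  · have key : ∫ x in s, 2 * D * |f x| ≤ ∫ x in s, ((f x)^2 + D^2) := by
      refine integral_mono_ae ((hf1.abs).const_mul _) (hf2.add (integrableOn_const hfin)) ?_
      refine Filter.Eventually.of_forall (fun x => ?_)
      simp only []
      nlinarith [sq_nonneg (|f x| - D), sq_abs (f x)]
    rw [integral_const_mul, integral_add hf2 (integrableOn_const hfin),
      setIntegral_const, measureReal_def] at key
    have hV : 0 ≤ (volume s).toReal := ENNReal.toReal_nonneg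
    have : 2 * D * ∫ x in s, |f x| ≤ 2 * D * ((volume s).toReal * D) := by
      calc 2 * D * ∫ x in s, |f x| ≤ (volume s).toReal * D^2 + (volume s).toReal • D^2 := by
            exact le_trans key (by gcongr)
        _ = 2 * D * ((volume s).toReal * D) := by simp [smul_eq_mul]; ring
    exact le_of_mul_le_mul_left this (by positivity)

lemma log_pos_aux {ρ' : ℝ} (h : 0 < ρ') : 0 < Real.log (1 + ρ'⁻¹) := by
  apply Real.log_pos
  have : 0 < ρ'⁻¹ := by positivity
  linarith

lemma good_rung {n : ℕ} (b : EuclideanSpace ℝ (Fin n) → ℝ) (Cb : ℝ)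
    (x₀ : EuclideanSpace ℝ (Fin n)) {ρ' : ℝ} (h0 : 0 < ρ')
    (P : EuclideanSpace ℝ (Fin n) → ℝ) (hPi : Integrable P volume)
    (hPsupp : Function.support P ⊆ ball x₀ ρ')
    {μ : ℝ} (hμ : 0 < μ)
    (hP2 : ∫ x, (P x)^2 ≤ (2*μ)^2 * ((volume (ball x₀ ρ')).toReal)⁻¹)
    (hPI : |∫ x, P x| ≤ (2*μ) * ((Real.log (1+ρ'⁻¹))⁻¹)^2)
    (hPb : |∫ x, P x * (b x - cB n b x₀ ρ')| ≤ (2*μ) * (Cb / Real.log (1+ρ'⁻¹))) :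
    IsApproxAtom n b Cb (fun x => P x / (2*μ)) x₀ ρ' := by
  have hℓ := log_pos_aux h0
  have h2μ : (0:ℝ) < 2*μ := by linarith
  refine ⟨h0, ?_, hPi.div_const _, ?_, ?_, ?_⟩
  · intro x hx
    apply hPsupp
    simp only [Function.mem_support] at hx ⊢
    intro h; apply hx; rw [h]; simp
  · have e : (fun x => (P x/(2*μ))^2) = fun x => (P x)^2 * (((2*μ)^2)⁻¹) := by
      funext x; field_simp
    calc ∫ x, (P x/(2*μ))^2 = (∫ x, (P x)^2) * (((2*μ)^2)⁻¹) := by rw [e, integral_mul_const]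
      _ ≤ ((2*μ)^2 * ((volume (ball x₀ ρ')).toReal)⁻¹) * (((2*μ)^2)⁻¹) := by
          gcongr
      _ = ((volume (ball x₀ ρ')).toReal)⁻¹ := by
          rw [mul_comm ((2*μ)^2), mul_assoc, mul_inv_cancel₀ (by positivity), mul_one]
  · rw [integral_div, abs_div, abs_of_pos h2μ, div_le_iff₀ h2μ]
    calc |∫ x, P x| ≤ (2*μ) * ((Real.log (1+ρ'⁻¹))⁻¹)^2 := hPI
      _ = ((Real.log (1+ρ'⁻¹))⁻¹)^2 * (2*μ) := mul_comm _ _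
  · have e : (fun x => (P x/(2*μ)) * (b x - cB n b x₀ ρ')) =
        fun x => (P x * (b x - cB n b x₀ ρ')) / (2*μ) := by
      funext x; ring
    rw [e, integral_div, abs_div, abs_of_pos h2μ, div_le_iff₀ h2μ]
    calc |∫ x, P x * (b x - cB n b x₀ ρ')| ≤ (2*μ) * (Cb / Real.log (1+ρ'⁻¹)) := hPb
      _ = (Cb / Real.log (1+ρ'⁻¹)) * (2*μ) := mul_comm _ _

lemma bad_rung {n : ℕ} (b : EuclideanSpace ℝ (Fin n) → ℝ) (Cb : ℝ)
    (hb : LocallyIntegrable b volume) (hCb : 0 ≤ Cb)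
    (x₀ : EuclideanSpace ℝ (Fin n)) {ρ' : ℝ} (h0 : 0 < ρ')
    (P : EuclideanSpace ℝ (Fin n) → ℝ) (hPi : Integrable P volume)
    (hPsupp : Function.support P ⊆ ball x₀ ρ')
    {M : ℝ} (hM : ∀ x, |P x| ≤ M)
    (hbad : ¬ IntegrableOn (fun x => (b x - cB n b x₀ ρ')^2) (ball x₀ ρ') volume)
    {ε : ℝ} (hε : ε = 1 ∨ ε = -1) {μ : ℝ} (hμ : 0 < μ)
    (hPI : |∫ x, P x| ≤ (2*μ) * ((Real.log (1+ρ'⁻¹))⁻¹)^2) :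
    IsApproxAtom n b Cb
      (fun x => (P x/2 + ε * ((ball x₀ ρ').indicator (fun y => b y - cB n b x₀ ρ') x
          - (∫ y in ball x₀ ρ', (b y - cB n b x₀ ρ')) * npsi x₀ ρ' x))/μ) x₀ ρ' := by
  have hℓ := log_pos_aux h0
  have h2μ : (0:ℝ) < 2*μ := by linarith
  have hε0 : ε ≠ 0 := by rcases hε with h | h <;> (rw [h]; norm_num)
  have hε2 : ε^2 = 1 := by rcases hε with h | h <;> (rw [h]; norm_num)
  set c' := cB n b x₀ ρ' with hc'
  set B := ball x₀ ρ' with hB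
  have hBmeas : MeasurableSet B := measurableSet_ball
  have hBfin : volume B ≠ ⊤ := measure_ball_lt_top.ne
  have hbint : IntegrableOn b B volume :=
    (hb.integrableOn_isCompact (isCompact_closedBall x₀ ρ')).mono_set ball_subset_closedBall
  have hfint : IntegrableOn (fun y => b y - c') B volume :=
    hbint.sub (integrableOn_const hBfin)
  set χ := B.indicator (fun y => b y - c') with hχdef
  have hχf : Integrable χ volume := hfint.integrable_indicator hBmeas
  set ψ := npsi x₀ ρ' with hψdef
  have hψi : Integrable ψ volume := integrable_npsi x₀
  have hψabs : ∀ x, |ψ x| ≤ ((volume B).toReal)⁻¹ := fun x => npsi_abs_le x₀ x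
  set α := ∫ y in B, (b y - c') with hα
  set w : EuclideanSpace ℝ (Fin n) → ℝ := fun x => χ x - α * ψ x with hwdef
  have hw : Integrable w volume := hχf.sub (hψi.const_mul α)
  have hχzero : ∀ x, x ∉ B → χ x = 0 := fun x hx => Set.indicator_of_notMem hx _
  have hψzero : ∀ x, x ∉ B → ψ x = 0 := fun x hx => npsi_eq_zero x₀ hx
  have hPzero : ∀ x, x ∉ B → P x = 0 := by
    intro x hx
    by_contra h
    exact hx (hPsupp h)
  -- non-integrability of the indicator of (b-c')²
  have hindsq : ¬ Integrable (B.indicator (fun y => (b y - c')^2)) volume := by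
    intro h
    exact hbad ((integrable_indicator_iff hBmeas).1 h)
  -- χ² = indicator of square
  have hχsq : ∀ x, χ x * χ x = B.indicator (fun y => (b y - c')^2) x := by
    intro x
    by_cases hx : x ∈ B
    · simp [hχdef, Set.indicator_of_mem hx, sq]
    · simp [hχdef, Set.indicator_of_notMem hx]
  -- integrability of the "good" part G
  have hPP : Integrable (fun x => P x * P x) volume :=
    hPi.bdd_mul hPi.aestronglyMeasurable (c := M) (Filter.Eventually.of_forall fun x => by simpa using hM x)
  have hψψ : Integrable (fun x => ψ x * ψ x) volume :=
    hψi.bdd_mul hψi.aestronglyMeasurable (c := ((volume B).toReal)⁻¹) (Filter.Eventually.of_forall fun x => by simpa using hψabs x)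
  have hPχ : Integrable (fun x => P x * χ x) volume :=
    hχf.bdd_mul hPi.aestronglyMeasurable (c := M) (Filter.Eventually.of_forall fun x => by simpa using hM x)
  have hPψ : Integrable (fun x => P x * ψ x) volume :=
    hψi.bdd_mul hPi.aestronglyMeasurable (c := M) (Filter.Eventually.of_forall fun x => by simpa using hM x)
  have hψχ : Integrable (fun x => ψ x * χ x) volume :=
    hχf.bdd_mul hψi.aestronglyMeasurable (c := ((volume B).toReal)⁻¹) (Filter.Eventually.of_forall fun x => by simpa using hψabs x)
  have hG : Integrable (fun x => P x * P x / 4 + α^2 * (ψ x * ψ x) + ε * (P x * χ x)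
      - ε * α * (P x * ψ x) - 2 * α * (ψ x * χ x)) volume := by
    exact ((((hPP.div_const 4).add ((hψψ.const_mul (α^2)))).add (hPχ.const_mul ε)).sub
      ((hPψ.const_mul (ε*α)))).sub ((hψχ.const_mul (2*α)))
  refine ⟨h0, ?_, ?_, ?_, ?_, ?_⟩
  · -- support
    intro x hx
    by_contra hxB
    apply hx
    simp only [hPzero x hxB, hχzero x hxB, hψzero x hxB]
    ring
  · -- integrable
    exact ((hPi.div_const 2).add (hw.const_mul ε)).div_const μ
  · -- L² bound: integrand is not integrable, integral is 0
    have hpt : ∀ x, ((P x/2 + ε * (χ x - α * ψ x))/μ)^2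
        = (μ^2)⁻¹ * (B.indicator (fun y => (b y - c')^2) x
            + (P x * P x / 4 + α^2 * (ψ x * ψ x) + ε * (P x * χ x)
               - ε * α * (P x * ψ x) - 2 * α * (ψ x * χ x))) := by
      intro x
      rw [← hχsq x]
      rcases hε with h | h <;> subst h <;> field_simp <;> ring
    have hni : ¬ Integrable (fun x => ((P x/2 + ε * (χ x - α * ψ x))/μ)^2) volume := by
      intro hcon
      have h1 : Integrable (fun x => B.indicator (fun y => (b y - c')^2) x
          + (P x * P x / 4 + α^2 * (ψ x * ψ x) + ε * (P x * χ x)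
             - ε * α * (P x * ψ x) - 2 * α * (ψ x * χ x))) volume := by
        have h2 := hcon.const_mul (μ^2)
        refine h2.congr (Filter.Eventually.of_forall (fun x => ?_))
        beta_reduce
        rw [hpt x, ← mul_assoc, mul_inv_cancel₀ (by positivity), one_mul]
      have h3 := h1.sub hG
      have h4 : Integrable (B.indicator (fun y => (b y - c')^2)) volume := by
        refine h3.congr (Filter.Eventually.of_forall (fun x => ?_))
        simp only [Pi.sub_apply]
        ring
      exact hindsq h4
    rw [integral_undef hni]
    positivity
  · -- integral value
    have hiw : ∫ x, w x = 0 := by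
      rw [hwdef]
      rw [integral_sub hχf (hψi.const_mul α), integral_const_mul,
        hχdef, integral_indicator hBmeas, hψdef, integral_npsi x₀ h0, mul_one, ← hα, sub_self]
    have hi : ∫ x, (P x/2 + ε * (χ x - α * ψ x))/μ = (∫ x, P x) / (2*μ) := by
      rw [integral_div, integral_add (hPi.div_const 2) (hw.const_mul ε),
        integral_const_mul, hiw, mul_zero, add_zero, integral_div, div_div]
    rw [hi, abs_div, abs_of_pos h2μ, div_le_iff₀ h2μ]
    calc |∫ x, P x| ≤ (2*μ) * ((Real.log (1+ρ'⁻¹))⁻¹)^2 := hPI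
      _ = ((Real.log (1+ρ'⁻¹))⁻¹)^2 * (2*μ) := mul_comm _ _
  · -- pairing: not integrable, so integral is 0
    have hpt2 : ∀ x, ((P x/2 + ε * (χ x - α * ψ x))/μ) * (b x - c')
        = (ε * μ⁻¹) * (B.indicator (fun y => (b y - c')^2) x)
          + (μ⁻¹ * (P x/2 - ε * α * ψ x)) * χ x := by
      intro x
      by_cases hx : x ∈ B
      · have h1 : χ x = b x - c' := Set.indicator_of_mem hx _
        have h2 : B.indicator (fun y => (b y - c')^2) x = (b x - c')^2 :=
          Set.indicator_of_mem hx _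
        rw [h1, h2]
        field_simp
        ring
      · rw [hχzero x hx, hψzero x hx, hPzero x hx,
          Set.indicator_of_notMem hx]
        ring
    have hgood2 : Integrable (fun x => (μ⁻¹ * (P x/2 - ε * α * ψ x)) * χ x) volume := by
      refine hχf.bdd_mul (c := μ⁻¹ * (M/2 + |ε * α| * ((volume B).toReal)⁻¹)) ?_ (Filter.Eventually.of_forall fun x => ?_)
      · exact (((hPi.div_const 2).sub (hψi.const_mul (ε*α))).const_mul μ⁻¹).aestronglyMeasurable
      · have h1 : |P x / 2 - ε * α * ψ x| ≤ M/2 + |ε * α| * ((volume B).toReal)⁻¹ := by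
          calc |P x / 2 - ε * α * ψ x| ≤ |P x / 2| + |ε * α * ψ x| := abs_sub _ _
            _ ≤ M/2 + |ε * α| * ((volume B).toReal)⁻¹ := by
                rw [abs_div, abs_mul]
                gcongr
                · exact (abs_nonneg _).trans (hM x)
                · exact hM x
                · norm_num
                · exact hψabs x
        calc ‖μ⁻¹ * (P x/2 - ε * α * ψ x)‖ = μ⁻¹ * |P x / 2 - ε * α * ψ x| := by
              rw [norm_mul, Real.norm_eq_abs, Real.norm_eq_abs, abs_of_pos (by positivity)]
          _ ≤ μ⁻¹ * (M/2 + |ε * α| * ((volume B).toReal)⁻¹) := by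
              have : (0:ℝ) ≤ μ⁻¹ := by positivity
              exact mul_le_mul_of_nonneg_left h1 this
    have hni2 : ¬ Integrable (fun x => ((P x/2 + ε * (χ x - α * ψ x))/μ) * (b x - c')) volume := by
      intro hcon
      have h1 : Integrable (fun x => (ε * μ⁻¹) * (B.indicator (fun y => (b y - c')^2) x)
          + (μ⁻¹ * (P x/2 - ε * α * ψ x)) * χ x) volume :=
        hcon.congr (Filter.Eventually.of_forall (fun x => hpt2 x))
      have h2 := h1.sub hgood2
      have h3 : Integrable (fun x => (ε * μ⁻¹) * (B.indicator (fun y => (b y - c')^2) x)) volume := by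
        refine h2.congr (Filter.Eventually.of_forall (fun x => ?_))
        simp only [Pi.sub_apply]
        ring
      exact (not_integrable_const_mul hindsq (by positivity : ε * μ⁻¹ ≠ 0)) h3
    rw [integral_undef hni2]
    simp only [abs_zero]
    exact div_nonneg hCb hℓ.le

lemma inv_le_scale {a b C : ℝ} (ha : 0 < a) (hb : 0 < b) (h : b ≤ C * a) : a⁻¹ ≤ C * b⁻¹ := by
  have h1 : 1/a ≤ C/b := by
    rw [div_le_div_iff₀ ha hb]; linarith
  simpa [one_div, div_eq_mul_inv] using h1

lemma npsi_sq_pt {n : ℕ} (x₀ : EuclideanSpace ℝ (Fin n)) (ρ : ℝ) (x : EuclideanSpace ℝ (Fin n)) :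
    (npsi x₀ ρ x)^2 = ((volume (ball x₀ ρ)).toReal)⁻¹ * npsi x₀ ρ x := by
  by_cases hx : x ∈ ball x₀ ρ
  · simp [npsi, Set.indicator_of_mem hx]; ring
  · simp [npsi, Set.indicator_of_notMem hx]

lemma npsi_mul_npsi {n : ℕ} (x₀ : EuclideanSpace ℝ (Fin n)) {ρa ρb : ℝ}
    (hsub : ball x₀ ρa ⊆ ball x₀ ρb) (x : EuclideanSpace ℝ (Fin n)) :
    npsi x₀ ρa x * npsi x₀ ρb x = ((volume (ball x₀ ρb)).toReal)⁻¹ * npsi x₀ ρa x := by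
  by_cases hx : x ∈ ball x₀ ρa
  · simp [npsi, Set.indicator_of_mem hx, Set.indicator_of_mem (hsub hx)]; ring
  · simp [npsi, Set.indicator_of_notMem hx]

lemma log_two_le_one : Real.log 2 ≤ 1 := by
  nlinarith [Real.log_le_sub_one_of_pos (by norm_num : (0:ℝ) < 2)]

/-- The normalizing constant for the rung atoms. -/
noncomputable def tMu (n : ℕ) (ρ : ℝ) : ℝ := 2^(n+2) * (1 + Real.log (1 + ρ⁻¹))

open Classical in
/-- Indicator of the bad (non-`L²`) case. -/
noncomputable def tS (n : ℕ) (b : EuclideanSpace ℝ (Fin n) → ℝ)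
    (x₀ : EuclideanSpace ℝ (Fin n)) (ρ : ℝ) : ℝ :=
  if IntegrableOn (fun y => (b y - cB n b x₀ ρ)^2) (ball x₀ ρ) volume then 0 else 1

lemma tMu_pos {n : ℕ} {ρ : ℝ} (h : 0 < ρ) : 0 < tMu n ρ := by
  have := log_pos_aux h
  unfold tMu
  positivity

set_option maxHeartbeats 2000000 in
lemma rung_isAtom {n : ℕ} (b : EuclideanSpace ℝ (Fin n) → ℝ) (Cb : ℝ)
    (hb : LocallyIntegrable b volume) (hCb : 0 ≤ Cb)
    (hbmo : ∀ (x₀ : EuclideanSpace ℝ (Fin n)) (ρ : ℝ), 0 < ρ →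
      ⨍ x in ball x₀ ρ, (b x - cB n b x₀ ρ) ^ 2 ≤ Cb ^ 2)
    (x₀ : EuclideanSpace ℝ (Fin n)) {ρa ρb : ℝ} (hA : 0 < ρa) (hB : 0 < ρb)
    (hab : ρa ≤ ρb) (h2 : ρb ≤ 2*ρa) (hb1 : ρb ≤ 1)
    {t : ℝ} (ht : t = 0 ∨ t = 1) (htI : t = 0 → ρb = 1)
    {ε : ℝ} (hε : ε = 1 ∨ ε = -1) :
    IsApproxAtom n b Cb (fun x =>
      ((npsi x₀ ρa x - t * npsi x₀ ρb x)/2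
        + ε * tS n b x₀ ρb
          * ((ball x₀ ρb).indicator (fun y => b y - cB n b x₀ ρb) x
             - (∫ y in ball x₀ ρb, (b y - cB n b x₀ ρb)) * npsi x₀ ρb x)) / tMu n ρb)
      x₀ ρb := by
  classical
  have hsub : ball x₀ ρa ⊆ ball x₀ ρb := ball_subset_ball hab
  set Va := (volume (ball x₀ ρa)).toReal with hVa
  set Vb := (volume (ball x₀ ρb)).toReal with hVb
  have hVa0 : 0 < Va := volR_pos x₀ hA
  have hVb0 : 0 < Vb := volR_pos x₀ hB
  have hdb : Vb ≤ 2^n * Va := ball_doubling x₀ hA hB h2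
  have hVaVb : Va⁻¹ ≤ 2^n * Vb⁻¹ := inv_le_scale hVa0 hVb0 hdb
  set ℓ := Real.log (1 + ρb⁻¹) with hℓdef
  have hℓ : 0 < ℓ := log_pos_aux hB
  have h2n : (1:ℝ) ≤ 2^n := one_le_pow₀ (by norm_num)
  have hμval : tMu n ρb = 2^(n+2) * (1 + ℓ) := rfl
  have h2n2 : (2:ℝ)^(n+2) = 4 * 2^n := by ring
  have hμpos : 0 < tMu n ρb := tMu_pos hB
  set μ := tMu n ρb with hμdef
  set P : EuclideanSpace ℝ (Fin n) → ℝ := fun x => npsi x₀ ρa x - t * npsi x₀ ρb x with hPdef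
  have hψa : Integrable (npsi x₀ ρa) volume := integrable_npsi x₀
  have hψb : Integrable (npsi x₀ ρb) volume := integrable_npsi x₀
  have hPi : Integrable P volume := hψa.sub (hψb.const_mul t)
  have hPsupp : Function.support P ⊆ ball x₀ ρb := by
    intro x hx
    by_contra hxB
    apply hx
    simp only [hPdef, npsi_eq_zero x₀ (fun h => hxB (hsub h)), npsi_eq_zero x₀ hxB]
    ring
  have habs_t : |t| ≤ 1 := by rcases ht with h | h <;> simp [h]
  have hM : ∀ x, |P x| ≤ Va⁻¹ + Vb⁻¹ := by
    intro x
    calc |P x| ≤ |npsi x₀ ρa x| + |t * npsi x₀ ρb x| := abs_sub _ _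
      _ ≤ Va⁻¹ + Vb⁻¹ := by
          rw [abs_mul]
          refine add_le_add (npsi_abs_le x₀ x) ?_
          calc |t| * |npsi x₀ ρb x| ≤ 1 * Vb⁻¹ :=
                mul_le_mul habs_t (npsi_abs_le x₀ x) (abs_nonneg _) (by norm_num)
            _ = Vb⁻¹ := one_mul _
  have hPint : ∫ x, P x = 1 - t := by
    rw [hPdef, integral_sub hψa (hψb.const_mul t), integral_const_mul,
      integral_npsi x₀ hA, integral_npsi x₀ hB, mul_one]
  have hPI : |∫ x, P x| ≤ (2*μ) * (ℓ⁻¹)^2 := by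
    rw [hPint]
    rcases ht with ht0 | ht1
    · -- t = 0, ρb = 1, ℓ = log 2 ≤ 1
      have hl1 : ℓ ≤ 1 := by
        rw [hℓdef, htI ht0]
        norm_num
        exact log_two_le_one
      have hinv : 1 ≤ ℓ⁻¹ := (one_le_inv₀ hℓ).2 hl1
      have hpow : 1 ≤ (ℓ⁻¹)^2 := one_le_pow₀ hinv
      have h2μ1 : 1 ≤ 2*μ := by
        rw [hμval]
        nlinarith [h2n, hℓ]

      rw [ht0]
      calc |1 - (0:ℝ)| = 1 := by norm_num
        _ ≤ 2*μ := h2μ1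
        _ ≤ (2*μ) * (ℓ⁻¹)^2 := le_mul_of_one_le_right (by linarith) hpow
    · rw [ht1]
      simp only [sub_self, abs_zero]
      positivity
  -- L² bound on P
  have hPsq : ∀ x, (P x)^2 = Va⁻¹ * npsi x₀ ρa x - (2*t)*(Vb⁻¹ * npsi x₀ ρa x)
      + t^2*(Vb⁻¹ * npsi x₀ ρb x) := by
    intro x
    have h1 := npsi_sq_pt x₀ ρa x
    have hcr := npsi_mul_npsi x₀ hsub x
    have h3 := npsi_sq_pt x₀ ρb x
    simp only [hPdef]
    linear_combination h1 - (2*t)*hcr + t^2*h3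
  have ha' : Integrable (fun x => Va⁻¹ * npsi x₀ ρa x) volume := hψa.const_mul _
  have hb' : Integrable (fun x => (2*t)*(Vb⁻¹ * npsi x₀ ρa x)) volume :=
    (hψa.const_mul Vb⁻¹).const_mul (2*t)
  have hc' : Integrable (fun x => t^2*(Vb⁻¹ * npsi x₀ ρb x)) volume :=
    (hψb.const_mul Vb⁻¹).const_mul (t^2)
  have hab' : Integrable (fun x => Va⁻¹ * npsi x₀ ρa x - (2*t)*(Vb⁻¹ * npsi x₀ ρa x)) volume :=
    ha'.sub hb'
  have hPsqInt : Integrable (fun x => (P x)^2) volume := by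
    have hI : Integrable (fun x => Va⁻¹ * npsi x₀ ρa x - (2*t)*(Vb⁻¹ * npsi x₀ ρa x)
        + t^2*(Vb⁻¹ * npsi x₀ ρb x)) volume := hab'.add hc'
    exact hI.congr (Filter.Eventually.of_forall (fun x => (hPsq x).symm))
  have hPsqval : ∫ x, (P x)^2 = Va⁻¹ - (2*t)*Vb⁻¹ + t^2*Vb⁻¹ := by
    rw [show (fun x => (P x)^2) = (fun x => Va⁻¹ * npsi x₀ ρa x
        - (2*t)*(Vb⁻¹ * npsi x₀ ρa x) + t^2*(Vb⁻¹ * npsi x₀ ρb x)) from funext hPsq]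
    rw [integral_add hab' hc', integral_sub ha' hb']
    simp only [integral_const_mul]
    rw [integral_npsi x₀ hA, integral_npsi x₀ hB]
    ring
  have hP2 : ∫ x, (P x)^2 ≤ (2*μ)^2 * Vb⁻¹ := by
    have hstep : ∫ x, (P x)^2 ≤ ((2:ℝ)^n + 1) * Vb⁻¹ := by
      rw [hPsqval]
      rcases ht with h | h <;> subst h <;>
        nlinarith [hVaVb, inv_nonneg.2 hVb0.le, inv_nonneg.2 hVa0.le]
    refine hstep.trans ?_
    have hcoef : ((2:ℝ)^n + 1) ≤ (2*μ)^2 := by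
      rw [hμval, h2n2]
      have hB1 : (1:ℝ) ≤ 1 + ℓ := by linarith
      have hXX : (2:ℝ)^n ≤ 2^n * 2^n := le_mul_of_one_le_left (by positivity) h2n
      have hBB : (1:ℝ) ≤ (1+ℓ)*(1+ℓ) := by nlinarith [hB1]
      have hprod : (0:ℝ) ≤ (2^n * 2^n) * ((1+ℓ)*(1+ℓ) - 1) :=
        mul_nonneg (by positivity) (by linarith)
      calc (2:ℝ)^n + 1 ≤ 2 * 2^n := by linarith
        _ ≤ 64 * ((2:ℝ)^n * 2^n) * ((1+ℓ)*(1+ℓ)) := by nlinarith [hXX, hprod]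
        _ = (2*(4*(2:ℝ)^n*(1+ℓ)))^2 := by ring
    exact mul_le_mul_of_nonneg_right hcoef (inv_nonneg.2 hVb0.le)
  by_cases hgood : IntegrableOn (fun y => (b y - cB n b x₀ ρb)^2) (ball x₀ ρb) volume
  · -- good case : the atom is P/(2μ)
    have hS : tS n b x₀ ρb = 0 := by rw [tS, if_pos hgood]
    have hfun : (fun x =>
        (P x/2
          + ε * tS n b x₀ ρb
            * ((ball x₀ ρb).indicator (fun y => b y - cB n b x₀ ρb) x
               - (∫ y in ball x₀ ρb, (b y - cB n b x₀ ρb)) * npsi x₀ ρb x)) / μ)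
        = fun x => P x / (2*μ) := by
      funext x
      rw [hS]
      ring
    rw [hfun]
    -- pairing bound in the good case
    have hBfin : volume (ball x₀ ρb) ≠ ⊤ := measure_ball_lt_top.ne
    have hfb : IntegrableOn (fun y => b y - cB n b x₀ ρb) (ball x₀ ρb) volume :=
      ((hb.integrableOn_isCompact (isCompact_closedBall x₀ ρb)).mono_set
        ball_subset_closedBall).sub (integrableOn_const hBfin)
    have hfa : IntegrableOn (fun y => b y - cB n b x₀ ρb) (ball x₀ ρa) volume :=
      hfb.mono_set hsub
    have havg := hbmo x₀ ρb hB
    rw [setAverage_eq (μ := volume)] at havg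
    have hsqI : ∫ x in ball x₀ ρb, (b x - cB n b x₀ ρb)^2 ≤ Vb * Cb^2 := by
      rw [smul_eq_mul, measureReal_def, ← hVb] at havg
      calc ∫ x in ball x₀ ρb, (b x - cB n b x₀ ρb)^2
          = Vb * (Vb⁻¹ * ∫ x in ball x₀ ρb, (b x - cB n b x₀ ρb)^2) := by
            rw [← mul_assoc, mul_inv_cancel₀ hVb0.ne', one_mul]
        _ ≤ Vb * Cb^2 := mul_le_mul_of_nonneg_left havg hVb0.le
    have habsb : ∫ x in ball x₀ ρb, |b x - cB n b x₀ ρb| ≤ Vb * Cb := by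
      have := setIntegral_abs_le_of_sq (measurableSet_ball) hBfin hfb hgood hCb
        (by rw [← hVb]; exact hsqI)
      rwa [← hVb] at this
    have habsa : ∫ x in ball x₀ ρa, |b x - cB n b x₀ ρb| ≤ Vb * Cb := by
      refine le_trans ?_ habsb
      exact setIntegral_mono_set hfb.abs
        (Filter.Eventually.of_forall (fun x => abs_nonneg _))
        (HasSubset.Subset.eventuallyLE hsub)
    have habs' : ∀ (s : Set (EuclideanSpace ℝ (Fin n))),
        |∫ x in s, (b x - cB n b x₀ ρb)| ≤ ∫ x in s, |b x - cB n b x₀ ρb| := by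
      intro s
      simpa [Real.norm_eq_abs] using
        norm_integral_le_integral_norm (μ := volume.restrict s) (fun x => b x - cB n b x₀ ρb)
    have hia : |∫ x in ball x₀ ρa, (b x - cB n b x₀ ρb)| ≤ Vb * Cb :=
      le_trans (habs' _) habsa
    have hib : |∫ x in ball x₀ ρb, (b x - cB n b x₀ ρb)| ≤ Vb * Cb :=
      le_trans (habs' _) habsb
    have hiP : ∫ x, P x * (b x - cB n b x₀ ρb)
        = Va⁻¹ * (∫ x in ball x₀ ρa, (b x - cB n b x₀ ρb))
          - t * (Vb⁻¹ * (∫ x in ball x₀ ρb, (b x - cB n b x₀ ρb))) := by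
      rw [show (fun x => P x * (b x - cB n b x₀ ρb))
          = (fun x => npsi x₀ ρa x * (b x - cB n b x₀ ρb)
              - t * (npsi x₀ ρb x * (b x - cB n b x₀ ρb))) from funext (fun x => by
            simp only [hPdef]; ring)]
      rw [integral_sub (integrable_npsi_mul x₀ _ hfa)
          ((integrable_npsi_mul x₀ _ hfb).const_mul t),
        integral_const_mul, integral_npsi_mul x₀ _, integral_npsi_mul x₀ _, ← hVa, ← hVb]
    have hPb : |∫ x, P x * (b x - cB n b x₀ ρb)| ≤ ((2:ℝ)^n + 1) * Cb := by
      rw [hiP]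
      calc |Va⁻¹ * (∫ x in ball x₀ ρa, (b x - cB n b x₀ ρb))
            - t * (Vb⁻¹ * (∫ x in ball x₀ ρb, (b x - cB n b x₀ ρb)))|
          ≤ |Va⁻¹ * (∫ x in ball x₀ ρa, (b x - cB n b x₀ ρb))|
            + |t * (Vb⁻¹ * (∫ x in ball x₀ ρb, (b x - cB n b x₀ ρb)))| := abs_sub _ _
        _ ≤ Va⁻¹ * (Vb * Cb) + 1 * (Vb⁻¹ * (Vb * Cb)) := by
            rw [abs_mul, abs_mul, abs_mul]
            refine add_le_add ?_ ?_
            · rw [abs_of_nonneg (inv_nonneg.2 hVa0.le)]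
              exact mul_le_mul_of_nonneg_left hia (inv_nonneg.2 hVa0.le)
            · refine mul_le_mul habs_t ?_ (by positivity) (by norm_num)
              rw [abs_of_nonneg (inv_nonneg.2 hVb0.le)]
              exact mul_le_mul_of_nonneg_left hib (inv_nonneg.2 hVb0.le)
        _ ≤ (2:ℝ)^n * Cb + 1 * Cb := by
            refine add_le_add ?_ ?_
            · calc Va⁻¹ * (Vb * Cb) ≤ (2^n * Vb⁻¹) * (Vb * Cb) :=
                    mul_le_mul_of_nonneg_right hVaVb (by positivity)
                _ = 2^n * Cb := by
                    linear_combination ((2:ℝ)^n * Cb) * inv_mul_cancel₀ hVb0.ne'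
            · rw [one_mul, one_mul]
              have h9 : Vb⁻¹ * (Vb * Cb) = Cb := by
                linear_combination Cb * inv_mul_cancel₀ hVb0.ne'
              rw [h9]
        _ = ((2:ℝ)^n + 1) * Cb := by ring
    rw [hVb] at hP2
    rw [hℓdef] at hPI
    refine good_rung b Cb x₀ hB P hPi hPsupp hμpos hP2 hPI ?_
    refine hPb.trans ?_
    have hcoef : ((2:ℝ)^n + 1) * ℓ ≤ 2*μ := by
      rw [hμval, h2n2]
      have hp1 : (0:ℝ) ≤ (7*2^n - 1) * ℓ := mul_nonneg (by nlinarith [h2n]) hℓ.le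
      nlinarith [h2n, hℓ, hp1]
    have hfin : ((2:ℝ)^n + 1) * Cb ≤ (2*μ) * (Cb / ℓ) := by
      calc ((2:ℝ)^n + 1) * Cb = (((2:ℝ)^n + 1) * ℓ * Cb) / ℓ := by
            rw [eq_div_iff hℓ.ne']; ring
        _ ≤ ((2*μ) * Cb) / ℓ := by
            refine (div_le_div_iff_of_pos_right hℓ).2 ?_
            exact mul_le_mul_of_nonneg_right hcoef hCb
        _ = (2*μ) * (Cb / ℓ) := by ring
    rw [hℓdef] at hfin
    exact hfin
  · -- bad case
    have hS : tS n b x₀ ρb = 1 := by rw [tS, if_neg hgood]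
    have hfun : (fun x =>
        (P x/2
          + ε * tS n b x₀ ρb
            * ((ball x₀ ρb).indicator (fun y => b y - cB n b x₀ ρb) x
               - (∫ y in ball x₀ ρb, (b y - cB n b x₀ ρb)) * npsi x₀ ρb x)) / μ)
        = fun x => (P x/2
          + ε * ((ball x₀ ρb).indicator (fun y => b y - cB n b x₀ ρb) x
             - (∫ y in ball x₀ ρb, (b y - cB n b x₀ ρb)) * npsi x₀ ρb x)) / μ := by
      funext x
      rw [hS]
      ring
    rw [hfun]
    rw [hℓdef] at hPI
    exact bad_rung b Cb hb hCb x₀ hB P hPi hPsupp hM hgood hε hμpos hPI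

set_option maxHeartbeats 2000000 in
lemma first_isAtom {n : ℕ} (b : EuclideanSpace ℝ (Fin n) → ℝ) (Cb : ℝ)
    (hb : LocallyIntegrable b volume) (hCb : 0 ≤ Cb)
    (x₀ : EuclideanSpace ℝ (Fin n)) {r : ℝ} (hr : 0 < r) (hr1 : r < 1)
    (A : EuclideanSpace ℝ (Fin n) → ℝ) (hA : IsApproxAtom n b Cb A x₀ r) :
    IsApproxAtom n b Cb (fun x => (A x - (∫ y, A y) * npsi x₀ r x)/4) x₀ r
    ∧ (∫ x, (A x - (∫ y, A y) * npsi x₀ r x)/4) = 0 := by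
  obtain ⟨-, hsupp, hAi, hA2, hAI, hAb⟩ := hA
  set c := ∫ y, A y with hcdef
  set L := Real.log (1 + r⁻¹) with hLdef
  have hL : 0 < L := log_pos_aux hr
  have hlog2 : (0.6931471803:ℝ) < Real.log 2 := Real.log_two_gt_d9
  have hL2 : Real.log 2 ≤ L := by
    rw [hLdef]
    apply Real.log_le_log (by norm_num)
    have : (1:ℝ) ≤ r⁻¹ := (one_le_inv₀ hr).2 hr1.le
    linarith
  have hLinv : L⁻¹ ≤ (Real.log 2)⁻¹ := by
    apply inv_anti₀ (by linarith) hL2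
  have h145 : (Real.log 2)⁻¹ ≤ 1.45 := by
    rw [inv_le_iff_one_le_mul₀ (by linarith)]
    nlinarith
  have hcabs : |c| ≤ 2.1025 := by
    refine hAI.trans ?_
    have h0 : 0 ≤ L⁻¹ := by positivity
    nlinarith [hLinv, h145]
  have hc2 : c^2 ≤ 7 := by
    nlinarith [abs_nonneg c, sq_abs c]
  set V := (volume (ball x₀ r)).toReal with hVdef
  have hV0 : 0 < V := volR_pos x₀ hr
  set ψ := npsi x₀ r with hψdef
  have hψi : Integrable ψ volume := integrable_npsi x₀
  have hψabs : ∀ x, |ψ x| ≤ V⁻¹ := fun x => npsi_abs_le x₀ x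
  have hψsq : ∀ x, (ψ x)^2 = V⁻¹ * ψ x := fun x => npsi_sq_pt x₀ r x
  have hψA : Integrable (fun x => ψ x * A x) volume :=
    hAi.bdd_mul hψi.aestronglyMeasurable (c := V⁻¹) (Filter.Eventually.of_forall fun x => by simpa using hψabs x)
  have hinteg : Integrable (fun x => (A x - c * ψ x)/4) volume :=
    (hAi.sub (hψi.const_mul c)).div_const 4
  have hzero : (∫ x, (A x - c * ψ x)/4) = 0 := by
    rw [integral_div, integral_sub hAi (hψi.const_mul c), integral_const_mul,
      integral_npsi x₀ hr, mul_one, ← hcdef, sub_self, zero_div]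
  have hBfin : volume (ball x₀ r) ≠ ⊤ := measure_ball_lt_top.ne
  have hbint : IntegrableOn b (ball x₀ r) volume :=
    (hb.integrableOn_isCompact (isCompact_closedBall x₀ r)).mono_set ball_subset_closedBall
  have hc₀ : cB n b x₀ r = ⨍ x in ball x₀ r, b x := if_pos hr1
  have hfball : IntegrableOn (fun y => b y - cB n b x₀ r) (ball x₀ r) volume :=
    hbint.sub (integrableOn_const hBfin)
  have hψb_int : Integrable (fun x => ψ x * (b x - cB n b x₀ r)) volume :=
    integrable_npsi_mul x₀ _ hfball
  have hψb_val : ∫ x, ψ x * (b x - cB n b x₀ r) = 0 := by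
    rw [hψdef, integral_npsi_mul x₀ _]
    rw [integral_sub hbint (integrableOn_const hBfin), setIntegral_const]
    have hc₀' : cB n b x₀ r = (volume (ball x₀ r)).toReal⁻¹ • ∫ x in ball x₀ r, b x := by
      rw [hc₀, setAverage_eq (μ := volume), measureReal_def]
    rw [smul_eq_mul] at hc₀'
    rw [smul_eq_mul, measureReal_def, ← hVdef]
    rw [← hVdef] at hc₀'
    rw [hc₀']
    rw [← mul_assoc V V⁻¹, mul_inv_cancel₀ hV0.ne', one_mul, sub_self, mul_zero]
  refine ⟨⟨hr, ?_, hinteg, ?_, ?_, ?_⟩, hzero⟩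
  · -- support
    intro x hx
    by_contra hxB
    apply hx
    have hA0 : A x = 0 := by
      by_contra h
      exact hxB (hsupp h)
    have hψ0 : ψ x = 0 := npsi_eq_zero x₀ hxB
    show (A x - c * ψ x)/4 = 0
    rw [hA0, hψ0]
    ring
  · -- L²
    by_cases hA2i : Integrable (fun x => (A x)^2) volume
    · have hg : Integrable (fun x => (A x)^2/8 + (c^2/8)*(V⁻¹ * ψ x)) volume :=
        (hA2i.div_const 8).add ((hψi.const_mul V⁻¹).const_mul (c^2/8))
      have hLHS : Integrable (fun x => ((A x - c * ψ x)/4)^2) volume := by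
        have hcomb : Integrable (fun x => (A x)^2/16 - (2*c/16)*(ψ x * A x)
            + (c^2/16)*(V⁻¹ * ψ x)) volume :=
          ((hA2i.div_const 16).sub (hψA.const_mul (2*c/16))).add
            ((hψi.const_mul V⁻¹).const_mul (c^2/16))
        refine hcomb.congr (Filter.Eventually.of_forall (fun x => ?_))
        linear_combination (-(c^2/16)) * hψsq x
      have hmono : ∫ x, ((A x - c * ψ x)/4)^2 ≤ ∫ x, ((A x)^2/8 + (c^2/8)*(V⁻¹ * ψ x)) := by
        refine integral_mono hLHS hg (fun x => ?_)
        have h := hψsq x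
        nlinarith [sq_nonneg (A x + c * ψ x)]
      refine hmono.trans ?_
      rw [integral_add (hA2i.div_const 8) ((hψi.const_mul V⁻¹).const_mul (c^2/8)),
        integral_div, integral_const_mul, integral_const_mul, integral_npsi x₀ hr, mul_one]
      rw [← hVdef]
      have h8 : (∫ x, (A x)^2) / 8 ≤ V⁻¹/8 := by
        linarith [hA2]
      have h78 : c^2/8 * V⁻¹ ≤ 7/8 * V⁻¹ := by
        apply mul_le_mul_of_nonneg_right (by linarith) (by positivity)
      linarith
    · have hni : ¬ Integrable (fun x => ((A x - c * ψ x)/4)^2) volume := by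
        intro hcon
        apply hA2i
        have hcomb : Integrable (fun x => 16*(((A x - c * ψ x)/4)^2)
            + (2*c)*(ψ x * A x) - (c^2)*(V⁻¹ * ψ x)) volume :=
          ((hcon.const_mul 16).add (hψA.const_mul (2*c))).sub
            ((hψi.const_mul V⁻¹).const_mul (c^2))
        refine hcomb.congr (Filter.Eventually.of_forall (fun x => ?_))
        linear_combination (c^2) * hψsq x
      rw [integral_undef hni]
      positivity
  · -- integral bound
    rw [hzero]
    simp only [abs_zero]
    positivity
  · -- pairing
    by_cases hAbi : Integrable (fun x => A x * (b x - cB n b x₀ r)) volume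
    · have he : (fun x => ((A x - c * ψ x)/4) * (b x - cB n b x₀ r))
          = fun x => (A x * (b x - cB n b x₀ r))/4 - (c/4)*(ψ x * (b x - cB n b x₀ r)) := by
        funext x; ring
      rw [he, integral_sub (hAbi.div_const 4) (hψb_int.const_mul (c/4)),
        integral_const_mul, hψb_val, mul_zero, sub_zero, integral_div, abs_div]
      rw [abs_of_pos (by norm_num : (0:ℝ) < 4)]
      have h2 : (0:ℝ) ≤ Cb / Real.log (1 + r⁻¹) := div_nonneg hCb (log_pos_aux hr).le
      have h3 := hAb
      linarith [h3, h2]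
    · have hni : ¬ Integrable (fun x => ((A x - c * ψ x)/4) * (b x - cB n b x₀ r)) volume := by
        intro hcon
        apply hAbi
        have hcomb : Integrable (fun x => 4*(((A x - c * ψ x)/4) * (b x - cB n b x₀ r))
            + c*(ψ x * (b x - cB n b x₀ r))) volume :=
          (hcon.const_mul 4).add (hψb_int.const_mul c)
        refine hcomb.congr (Filter.Eventually.of_forall (fun x => ?_))
        ring
      rw [integral_undef hni]
      simp only [abs_zero]
      exact div_nonneg hCb hL.le

/-- The telescoping radii. -/
noncomputable def tRho (r : ℝ) (j : ℕ) : ℝ := min ((2:ℝ)^j * r) 1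

lemma tRho_pos {r : ℝ} (hr : 0 < r) (j : ℕ) : 0 < tRho r j :=
  lt_min (by positivity) one_pos

lemma tRho_le_one (r : ℝ) (j : ℕ) : tRho r j ≤ 1 := min_le_right _ _

lemma tRho_zero {r : ℝ} (hr1 : r ≤ 1) : tRho r 0 = r := by
  rw [tRho, pow_zero, one_mul, min_eq_left hr1]

lemma tRho_mono {r : ℝ} (hr : 0 < r) (j : ℕ) : tRho r j ≤ tRho r (j+1) := by
  refine min_le_min ?_ le_rfl
  have h2 : (2:ℝ)^(j+1) = 2 * 2^j := by ring
  nlinarith [pow_pos (show (0:ℝ) < 2 by norm_num) j, hr]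

lemma tRho_db {r : ℝ} (hr : 0 < r) (j : ℕ) : tRho r (j+1) ≤ 2 * tRho r j := by
  rcases le_total ((2:ℝ)^j * r) 1 with h | h
  · calc tRho r (j+1) ≤ (2:ℝ)^(j+1) * r := min_le_left _ _
      _ = 2 * ((2:ℝ)^j * r) := by ring
      _ = 2 * tRho r j := by rw [tRho, min_eq_left h]
  · calc tRho r (j+1) ≤ 1 := min_le_right _ _
      _ ≤ 2 * 1 := by norm_num
      _ = 2 * tRho r j := by rw [tRho, min_eq_right h]

lemma tRho_ge {r : ℝ} (hr : 0 < r) (hr1 : r ≤ 1) (j : ℕ) : r ≤ tRho r j :=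
  le_min (le_mul_of_one_le_left hr.le (one_le_pow₀ (by norm_num))) hr1

lemma tRho_eq_one {r : ℝ} {j : ℕ} (h : 1 ≤ (2:ℝ)^j * r) : tRho r j = 1 :=
  min_eq_right h

/-- The rung atoms of the telescoping decomposition. -/
noncomputable def rungAtom (n : ℕ) (b : EuclideanSpace ℝ (Fin n) → ℝ)
    (x₀ : EuclideanSpace ℝ (Fin n)) (r : ℝ) (K : ℕ) (j : ℕ) (ε : ℝ) :
    EuclideanSpace ℝ (Fin n) → ℝ :=
  fun x => ((npsi x₀ (tRho r j) x - (if j < K then (1:ℝ) else 0) * npsi x₀ (tRho r (j+1)) x)/2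
    + ε * tS n b x₀ (tRho r (j+1))
      * ((ball x₀ (tRho r (j+1))).indicator (fun y => b y - cB n b x₀ (tRho r (j+1))) x
         - (∫ y in ball x₀ (tRho r (j+1)), (b y - cB n b x₀ (tRho r (j+1))))
            * npsi x₀ (tRho r (j+1)) x))
    / tMu n (tRho r (j+1))

lemma rungAtom_isAtom {n : ℕ} (b : EuclideanSpace ℝ (Fin n) → ℝ) (Cb : ℝ)
    (hb : LocallyIntegrable b volume) (hCb : 0 ≤ Cb)
    (hbmo : ∀ (x₀ : EuclideanSpace ℝ (Fin n)) (ρ : ℝ), 0 < ρ →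
      ⨍ x in ball x₀ ρ, (b x - cB n b x₀ ρ) ^ 2 ≤ Cb ^ 2)
    (x₀ : EuclideanSpace ℝ (Fin n)) {r : ℝ} (hr : 0 < r) (hr1 : r < 1)
    {K : ℕ} (hK1 : 1 ≤ (2:ℝ)^K * r) (j : ℕ) (hj : j ≤ K)
    {ε : ℝ} (hε : ε = 1 ∨ ε = -1) :
    IsApproxAtom n b Cb (rungAtom n b x₀ r K j ε) x₀ (tRho r (j+1)) := by
  have hA : 0 < tRho r j := tRho_pos hr j
  have hB : 0 < tRho r (j+1) := tRho_pos hr (j+1)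
  have hab : tRho r j ≤ tRho r (j+1) := tRho_mono hr j
  have h2 : tRho r (j+1) ≤ 2 * tRho r j := tRho_db hr j
  have hb1 : tRho r (j+1) ≤ 1 := tRho_le_one r (j+1)
  have ht : (if j < K then (1:ℝ) else 0) = 0 ∨ (if j < K then (1:ℝ) else 0) = 1 := by
    by_cases h : j < K
    · exact Or.inr (if_pos h)
    · exact Or.inl (if_neg h)
  have htI : (if j < K then (1:ℝ) else 0) = 0 → tRho r (j+1) = 1 := by
    intro h0
    have hjK : ¬ (j < K) := by
      intro h
      rw [if_pos h] at h0
      norm_num at h0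
    have hjeq : j = K := le_antisymm hj (le_of_not_gt hjK)
    apply tRho_eq_one
    rw [hjeq]
    calc (1:ℝ) ≤ (2:ℝ)^K * r := hK1
      _ ≤ (2:ℝ)^(K+1) * r := by
          have h2 : (2:ℝ)^(K+1) = 2 * 2^K := by ring
          nlinarith [pow_pos (show (0:ℝ) < 2 by norm_num) K, hr]
  exact rung_isAtom b Cb hb hCb hbmo x₀ hA hB hab h2 hb1 ht htI hε

lemma rungAtom_pair_sum {n : ℕ} (b : EuclideanSpace ℝ (Fin n) → ℝ)
    (x₀ : EuclideanSpace ℝ (Fin n)) (r : ℝ) (K j : ℕ) (x : EuclideanSpace ℝ (Fin n)) :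
    rungAtom n b x₀ r K j 1 x + rungAtom n b x₀ r K j (-1) x
      = (npsi x₀ (tRho r j) x - (if j < K then (1:ℝ) else 0) * npsi x₀ (tRho r (j+1)) x)
        / tMu n (tRho r (j+1)) := by
  simp only [rungAtom]
  ring

set_option maxHeartbeats 1000000 in
lemma rungAtom_integral_zero {n : ℕ} (b : EuclideanSpace ℝ (Fin n) → ℝ)
    (hb : LocallyIntegrable b volume)
    (x₀ : EuclideanSpace ℝ (Fin n)) {r : ℝ} (hr : 0 < r) (K : ℕ) {j : ℕ} (hjK : j < K)
    (ε : ℝ) : ∫ x, rungAtom n b x₀ r K j ε x = 0 := by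
  have hA : 0 < tRho r j := tRho_pos hr j
  have hB : 0 < tRho r (j+1) := tRho_pos hr (j+1)
  set ρb := tRho r (j+1) with hρb
  set c' := cB n b x₀ ρb with hc'
  have hBfin : volume (ball x₀ ρb) ≠ ⊤ := measure_ball_lt_top.ne
  have hbint : IntegrableOn b (ball x₀ ρb) volume :=
    (hb.integrableOn_isCompact (isCompact_closedBall x₀ ρb)).mono_set ball_subset_closedBall
  have hfint : IntegrableOn (fun y => b y - c') (ball x₀ ρb) volume :=
    hbint.sub (integrableOn_const hBfin)
  have hχf : Integrable ((ball x₀ ρb).indicator (fun y => b y - c')) volume :=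
    hfint.integrable_indicator measurableSet_ball
  have hψa : Integrable (npsi x₀ (tRho r j)) volume := integrable_npsi x₀
  have hψb : Integrable (npsi x₀ ρb) volume := integrable_npsi x₀
  set α := ∫ y in ball x₀ ρb, (b y - c') with hα
  have hw : Integrable (fun x => (ball x₀ ρb).indicator (fun y => b y - c') x
      - α * npsi x₀ ρb x) volume := hχf.sub (hψb.const_mul α)
  have hiw : ∫ x, ((ball x₀ ρb).indicator (fun y => b y - c') x - α * npsi x₀ ρb x) = 0 := by
    rw [integral_sub hχf (hψb.const_mul α), integral_const_mul,
      integral_indicator measurableSet_ball, integral_npsi x₀ hB, mul_one, ← hα, sub_self]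
  have hq : Integrable (fun x => (npsi x₀ (tRho r j) x
      - (if j < K then (1:ℝ) else 0) * npsi x₀ ρb x)/2) volume :=
    (hψa.sub (hψb.const_mul _)).div_const 2
  simp only [rungAtom, ← hρb, ← hc', ← hα]
  rw [integral_div, integral_add hq (hw.const_mul (ε * tS n b x₀ ρb)),
    integral_const_mul, hiw, mul_zero, add_zero, integral_div,
    integral_sub hψa (hψb.const_mul _), integral_const_mul,
    integral_npsi x₀ hA, integral_npsi x₀ hB, mul_one, if_pos hjK, sub_self, zero_div, zero_div]

lemma mul_div_self_cancel' {a b : ℝ} (h : a ≠ 0) : a * (b / a) = b := by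
  field_simp


set_option maxHeartbeats 4000000 in
/-- every approximate `h¹_b` atom on a small ball decomposes as a finite
combination of approximate `h¹_b` atoms with exact vanishing integral on small balls,
with `ℓ¹` coefficient bound depending only on the dimension. -/
theorem approx_atom_decomposition (n : ℕ) :
    ∃ C > (0 : ℝ), ∀ (b : EuclideanSpace ℝ (Fin n) → ℝ) (Cb : ℝ),
      LocallyIntegrable b volume → 0 ≤ Cb →
      (∀ (x₀ : EuclideanSpace ℝ (Fin n)) (r : ℝ), 0 < r →
        ⨍ x in Metric.ball x₀ r, (b x - cB n b x₀ r) ^ 2 ≤ Cb ^ 2) →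
      ∀ (A : EuclideanSpace ℝ (Fin n) → ℝ) (x₀ : EuclideanSpace ℝ (Fin n)) (r : ℝ),
        r < 1 → IsApproxAtom n b Cb A x₀ r →
        ∃ (k : ℕ) (lam : Fin k → ℝ) (as : Fin k → EuclideanSpace ℝ (Fin n) → ℝ)
          (cs : Fin k → EuclideanSpace ℝ (Fin n)) (rs : Fin k → ℝ),
          (∀ x, A x = ∑ j, lam j * as j x) ∧
          (∀ j, IsApproxAtom n b Cb (as j) (cs j) (rs j)) ∧
          (∀ j, rs j < 1 → (∫ x, as j x) = 0) ∧
          (∑ j, |lam j|) ≤ C := by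
  classical
  refine ⟨40 * 2^(n+2), by positivity, ?_⟩
  intro b Cb hb hCb hbmo A x₀ r hr1 hA
  have hr : 0 < r := hA.1
  have hAI := hA.2.2.2.2.1
  set c := ∫ y, A y with hc
  set L := Real.log (1 + r⁻¹) with hL
  have hLpos : 0 < L := log_pos_aux hr
  have hrinv1 : (1:ℝ) ≤ r⁻¹ := (one_le_inv₀ hr).2 hr1.le
  have hlog2pos : (0.6931471803:ℝ) < Real.log 2 := Real.log_two_gt_d9
  have hL2 : Real.log 2 ≤ L := by
    rw [hL]
    apply Real.log_le_log (by norm_num)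
    linarith
  have hLhalf : (1/2:ℝ) ≤ L := by linarith
  set K := ⌈Real.logb 2 r⁻¹⌉₊ with hK
  have hK1 : 1 ≤ (2:ℝ)^K * r := by
    have h1 : Real.logb 2 r⁻¹ ≤ (K:ℝ) := Nat.le_ceil _
    have h2 : r⁻¹ ≤ (2:ℝ)^(K:ℝ) := by
      calc r⁻¹ = (2:ℝ) ^ (Real.logb 2 r⁻¹) :=
            (Real.rpow_logb (by norm_num) (by norm_num) (by positivity)).symm
        _ ≤ (2:ℝ)^(K:ℝ) := Real.rpow_le_rpow_of_exponent_le (by norm_num) h1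
    rw [Real.rpow_natCast] at h2
    calc (1:ℝ) = r⁻¹ * r := (inv_mul_cancel₀ hr.ne').symm
      _ ≤ (2:ℝ)^K * r := mul_le_mul_of_nonneg_right h2 hr.le
  have hKL : (K:ℝ) + 1 ≤ 2*L + 2 := by
    have h0 : 0 ≤ Real.logb 2 r⁻¹ := Real.logb_nonneg (by norm_num) hrinv1
    have h1 : (K:ℝ) < Real.logb 2 r⁻¹ + 1 := Nat.ceil_lt_add_one h0
    have h3 : Real.log r⁻¹ ≤ L := by
      rw [hL]
      apply Real.log_le_log (by positivity)
      linarith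
    have h5 : Real.logb 2 r⁻¹ ≤ 2 * L := by
      rw [Real.logb, div_le_iff₀ (by linarith : (0:ℝ) < Real.log 2)]
      nlinarith [h3, hLpos]
    linarith
  refine ⟨2*K+3,
    (fun i => if i.val = 0 then (4:ℝ) else c * tMu n (tRho r ((i.val-1)/2 + 1))),
    (fun i x => if i.val = 0 then (A x - c * npsi x₀ r x)/4
      else rungAtom n b x₀ r K ((i.val-1)/2) (if (i.val-1) % 2 = 0 then 1 else -1) x),
    (fun _ => x₀),
    (fun i => if i.val = 0 then r else tRho r ((i.val-1)/2 + 1)), ?_, ?_, ?_, ?_⟩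
  · -- reconstruction
    intro x
    rw [Fin.sum_univ_eq_sum_range (fun i => (if i = 0 then (4:ℝ)
        else c * tMu n (tRho r ((i-1)/2 + 1)))
      * (if i = 0 then (A x - c * npsi x₀ r x)/4
        else rungAtom n b x₀ r K ((i-1)/2) (if (i-1) % 2 = 0 then 1 else -1) x)) (2*K+3)]
    rw [show 2*K+3 = 2*(K+1)+1 from by ring, Finset.sum_range_succ']
    have hG0 : (if (0:ℕ) = 0 then (4:ℝ) else c * tMu n (tRho r ((0-1)/2 + 1)))
        * (if (0:ℕ) = 0 then (A x - c * npsi x₀ r x)/4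
          else rungAtom n b x₀ r K ((0-1)/2) (if (0-1) % 2 = 0 then 1 else -1) x)
        = A x - c * npsi x₀ r x := by
      rw [if_pos rfl, if_pos rfl]
      ring
    rw [hG0]
    have hGs : ∀ i ∈ Finset.range (2*(K+1)),
        (if i+1 = 0 then (4:ℝ) else c * tMu n (tRho r ((i+1-1)/2 + 1)))
        * (if i+1 = 0 then (A x - c * npsi x₀ r x)/4
          else rungAtom n b x₀ r K ((i+1-1)/2) (if (i+1-1) % 2 = 0 then 1 else -1) x)
        = (c * tMu n (tRho r (i/2 + 1)))
            * rungAtom n b x₀ r K (i/2) (if i % 2 = 0 then 1 else -1) x := by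
      intro i _
      rw [if_neg (Nat.succ_ne_zero i), if_neg (Nat.succ_ne_zero i), Nat.add_sub_cancel]
    rw [Finset.sum_congr rfl hGs, sum_range_two_mul (K+1)]
    have hpair : ∀ j ∈ Finset.range (K+1),
        ((c * tMu n (tRho r ((2*j)/2 + 1)))
            * rungAtom n b x₀ r K ((2*j)/2) (if (2*j) % 2 = 0 then 1 else -1) x
          + (c * tMu n (tRho r ((2*j+1)/2 + 1)))
            * rungAtom n b x₀ r K ((2*j+1)/2) (if (2*j+1) % 2 = 0 then 1 else -1) x)
        = c * (npsi x₀ (tRho r j) x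
            - (if j < K then (1:ℝ) else 0) * npsi x₀ (tRho r (j+1)) x) := by
      intro j _
      have e1 : (2*j)/2 = j := by omega
      have e2 : ¬((2*j+1) % 2 = 0) := by omega
      have e3 : (2*j+1)/2 = j := by omega
      have e4 : (2*j) % 2 = 0 := by omega
      rw [e1, e3, if_pos e4, if_neg e2]
      rw [← mul_add, mul_assoc, rungAtom_pair_sum,
        mul_div_self_cancel' (tMu_pos (tRho_pos hr (j+1))).ne']
    rw [Finset.sum_congr rfl hpair, ← Finset.mul_sum]
    have htel : ∑ j ∈ Finset.range (K+1), (npsi x₀ (tRho r j) x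
        - (if j < K then (1:ℝ) else 0) * npsi x₀ (tRho r (j+1)) x) = npsi x₀ r x := by
      rw [Finset.sum_range_succ]
      have h1 : ∀ j ∈ Finset.range K, (npsi x₀ (tRho r j) x
          - (if j < K then (1:ℝ) else 0) * npsi x₀ (tRho r (j+1)) x)
          = npsi x₀ (tRho r j) x - npsi x₀ (tRho r (j+1)) x := by
        intro j hj
        rw [if_pos (Finset.mem_range.1 hj), one_mul]
      rw [Finset.sum_congr rfl h1, Finset.sum_range_sub' (fun j => npsi x₀ (tRho r j) x) K,
        if_neg (lt_irrefl K), zero_mul, sub_zero, tRho_zero hr1.le]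
      ring
    rw [htel]
    ring
  · -- each is an atom
    intro j
    beta_reduce
    by_cases hj0 : j.val = 0
    · have e1 : (fun x => if j.val = 0 then (A x - c * npsi x₀ r x)/4
          else rungAtom n b x₀ r K ((j.val-1)/2) (if (j.val-1) % 2 = 0 then 1 else -1) x)
          = fun x => (A x - c * npsi x₀ r x)/4 := funext (fun x => if_pos hj0)
      rw [e1, if_pos hj0]
      have h := (first_isAtom b Cb hb hCb x₀ hr hr1 A hA).1
      rw [← hc] at h
      exact h
    · have e1 : (fun x => if j.val = 0 then (A x - c * npsi x₀ r x)/4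
          else rungAtom n b x₀ r K ((j.val-1)/2) (if (j.val-1) % 2 = 0 then 1 else -1) x)
          = fun x => rungAtom n b x₀ r K ((j.val-1)/2)
              (if (j.val-1) % 2 = 0 then 1 else -1) x := funext (fun x => if_neg hj0)
      rw [e1, if_neg hj0]
      have hjle : (j.val - 1)/2 ≤ K := by
        have := j.2
        omega
      exact rungAtom_isAtom b Cb hb hCb hbmo x₀ hr hr1 hK1 _ hjle
        (by by_cases h : (j.val-1) % 2 = 0
            · exact Or.inl (if_pos h)
            · exact Or.inr (if_neg h))
  · -- vanishing integrals on small balls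
    intro j hjlt
    beta_reduce
    beta_reduce at hjlt
    by_cases hj0 : j.val = 0
    · have e1 : (fun x => if j.val = 0 then (A x - c * npsi x₀ r x)/4
          else rungAtom n b x₀ r K ((j.val-1)/2) (if (j.val-1) % 2 = 0 then 1 else -1) x)
          = fun x => (A x - c * npsi x₀ r x)/4 := funext (fun x => if_pos hj0)
      rw [e1]
      have h := (first_isAtom b Cb hb hCb x₀ hr hr1 A hA).2
      rw [← hc] at h
      exact h
    · have e1 : (fun x => if j.val = 0 then (A x - c * npsi x₀ r x)/4
          else rungAtom n b x₀ r K ((j.val-1)/2) (if (j.val-1) % 2 = 0 then 1 else -1) x)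
          = fun x => rungAtom n b x₀ r K ((j.val-1)/2)
              (if (j.val-1) % 2 = 0 then 1 else -1) x := funext (fun x => if_neg hj0)
      rw [e1]
      rw [if_neg hj0] at hjlt
      have hjle : (j.val - 1)/2 ≤ K := by
        have := j.2
        omega
      have hjK : (j.val - 1)/2 < K := by
        rcases lt_or_eq_of_le hjle with h | h
        · exact h
        · exfalso
          rw [h] at hjlt
          have : tRho r (K+1) = 1 := by
            apply tRho_eq_one
            calc (1:ℝ) ≤ (2:ℝ)^K * r := hK1
              _ ≤ (2:ℝ)^(K+1) * r := by
                  have h2 : (2:ℝ)^(K+1) = 2 * 2^K := by ring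
                  nlinarith [pow_pos (show (0:ℝ) < 2 by norm_num) K, hr]
          rw [this] at hjlt
          exact lt_irrefl 1 hjlt
      exact rungAtom_integral_zero b hb x₀ hr K hjK _
  · -- coefficient bound
    rw [Fin.sum_univ_eq_sum_range (fun i => |(if i = 0 then (4:ℝ)
        else c * tMu n (tRho r ((i-1)/2 + 1)))|) (2*K+3)]
    rw [show 2*K+3 = 2*(K+1)+1 from by ring, Finset.sum_range_succ']
    have hG0 : |(if (0:ℕ) = 0 then (4:ℝ) else c * tMu n (tRho r ((0-1)/2 + 1)))| = 4 := by
      rw [if_pos rfl]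
      norm_num
    rw [hG0]
    have hX : (1:ℝ) ≤ 2^(n+2) := one_le_pow₀ (by norm_num)
    have hbound : ∀ i ∈ Finset.range (2*(K+1)),
        |(if i+1 = 0 then (4:ℝ) else c * tMu n (tRho r ((i+1-1)/2 + 1)))|
          ≤ |c| * (2^(n+2) * (1+L)) := by
      intro i _
      rw [if_neg (Nat.succ_ne_zero i), Nat.add_sub_cancel, abs_mul]
      refine mul_le_mul_of_nonneg_left ?_ (abs_nonneg c)
      set ρ' := tRho r (i/2 + 1) with hρ'
      have hρ0 : 0 < ρ' := tRho_pos hr _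
      have hρr : r ≤ ρ' := tRho_ge hr hr1.le _
      have hℓ' : Real.log (1 + ρ'⁻¹) ≤ L := by
        rw [hL]
        apply Real.log_le_log (by positivity)
        have : ρ'⁻¹ ≤ r⁻¹ := inv_anti₀ hr hρr
        linarith
      have hμ : tMu n ρ' ≤ 2^(n+2) * (1+L) := by
        rw [tMu]
        apply mul_le_mul_of_nonneg_left (by linarith) (by positivity)
      calc |tMu n ρ'| = tMu n ρ' := abs_of_pos (tMu_pos hρ0)
        _ ≤ 2^(n+2) * (1+L) := hμ
    have hsum : ∑ i ∈ Finset.range (2*(K+1)),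
        |(if i+1 = 0 then (4:ℝ) else c * tMu n (tRho r ((i+1-1)/2 + 1)))|
          ≤ (2*(K+1) : ℕ) * (|c| * (2^(n+2) * (1+L))) := by
      have := Finset.sum_le_card_nsmul (Finset.range (2*(K+1))) _ _ hbound
      rwa [Finset.card_range, nsmul_eq_mul] at this
    refine le_trans (add_le_add_left hsum 4) ?_
    -- numeric estimate
    have hcabs : |c| ≤ (L⁻¹)^2 := hAI
    have hc1 : |c| * L^2 ≤ 1 := by
      calc |c| * L^2 ≤ (L⁻¹)^2 * L^2 := mul_le_mul_of_nonneg_right hcabs (sq_nonneg L)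
        _ = (L⁻¹ * L)^2 := by ring
        _ = 1 := by rw [inv_mul_cancel₀ hLpos.ne']; norm_num
    have hcL1 : |c| * L ≤ 2 := by
      nlinarith [hc1, hLhalf, mul_nonneg (abs_nonneg c) hLpos.le]
    have hc4 : |c| ≤ 4 := by
      nlinarith [hc1, hLhalf, abs_nonneg c, hLpos]
    have hcast : ((2*(K+1) : ℕ) : ℝ) = 2*((K:ℝ)+1) := by push_cast; ring
    rw [hcast]
    have h36 : 2*((K:ℝ)+1) * (|c| * (1+L)) ≤ 36 := by
      have hnn : (0:ℝ) ≤ |c| * (1+L) := mul_nonneg (abs_nonneg c) (by linarith)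
      calc 2*((K:ℝ)+1) * (|c| * (1+L)) ≤ 2*(2*L+2) * (|c| * (1+L)) := by
            apply mul_le_mul_of_nonneg_right (by linarith) hnn
        _ = 4*(|c| * L^2) + 8*(|c| * L) + 4 * |c| := by ring
        _ ≤ 4*1 + 8*2 + 4*4 := by
            have e1 : 4*(|c| * L^2) ≤ 4*1 := by linarith [hc1]
            have e2 : 8*(|c| * L) ≤ 8*2 := by linarith [hcL1]
            have e3 : 4 * |c| ≤ 4*4 := by linarith [hc4]
            linarith
        _ = 36 := by norm_num
    have hfin : 2*((K:ℝ)+1) * (|c| * (2^(n+2) * (1+L))) ≤ 36 * 2^(n+2) := by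
      have e : 2*((K:ℝ)+1) * (|c| * (2^(n+2) * (1+L)))
          = (2*((K:ℝ)+1) * (|c| * (1+L))) * 2^(n+2) := by ring
      rw [e]
      apply mul_le_mul_of_nonneg_right h36 (by positivity)
    linarith [hfin, hX]
end

section
/- Let b ∈ L¹_loc(ℝⁿ). Suppose there exists a constant C_b such that for every ball B of radius r and every function a supported in B with ‖a‖_{L∞} ≤ |B|^{-1} and (when r < 1) ∫a = 0, one has |∫ ab| ≤ min{C_b, C_b log 2 / log(1+r^{-1})}. Then b ∈ lmo(ℝⁿ), i.e. sup_{r(B)<1} log(1+r(B)^{-1}) ⨍_B |b − b_B| ≤ C'·C_b and sup_{r(B)≥1} ⨍_B |b| ≤ C'·C_b for an absolute constant C'. -/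
open MeasureTheory Metric Real Set

/-- if the pairing of `b` with every (local, bounded) atom satisfies the
logarithmic bound `|∫ ab| ≤ min{C_b, C_b log 2 / log(1+r⁻¹)}`, then `b ∈ lmo(ℝⁿ)`. -/
theorem lmo_from_atom_pairings (n : ℕ) (b : EuclideanSpace ℝ (Fin n) → ℝ) (Cb : ℝ)
    (hb : LocallyIntegrable b volume)
    (H : ∀ (x₀ : EuclideanSpace ℝ (Fin n)) (r : ℝ) (a : EuclideanSpace ℝ (Fin n) → ℝ),
      0 < r → Function.support a ⊆ Metric.ball x₀ r →
      (∀ x, |a x| ≤ ((volume (Metric.ball x₀ r)).toReal)⁻¹) →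
      Integrable a volume → (r < 1 → (∫ x, a x) = 0) →
      |∫ x, a x * b x| ≤ min Cb (Cb * Real.log 2 / Real.log (1 + r⁻¹))) :
    ∃ C' > (0 : ℝ),
      (∀ (x₀ : EuclideanSpace ℝ (Fin n)) (r : ℝ), 0 < r → r < 1 →
        Real.log (1 + r⁻¹) *
          ⨍ x in Metric.ball x₀ r, |b x - ⨍ y in Metric.ball x₀ r, b y| ≤ C' * Cb) ∧
      (∀ (x₀ : EuclideanSpace ℝ (Fin n)) (r : ℝ), 1 ≤ r →
        ⨍ x in Metric.ball x₀ r, |b x| ≤ C' * Cb) := by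
  classical
  have hlog2 : (0:ℝ) < Real.log 2 := Real.log_pos (by norm_num)
  have hC'pos : (0:ℝ) < 2 * Real.log 2 := by positivity
  have hC'ge1 : (1:ℝ) ≤ 2 * Real.log 2 := by
    nlinarith [Real.log_two_gt_d9]
  -- Cb is nonnegative (test with the zero atom)
  have hCb : 0 ≤ Cb := by
    have h0 := H 0 1 (fun _ => 0) one_pos (by simp)
      (fun x => by simp) (integrable_zero _ _ _) (fun h => by simp)
    simp only [zero_mul, integral_zero, abs_zero] at h0
    exact le_trans h0 (min_le_left _ _)
  -- measurable representative of b
  set g : EuclideanSpace ℝ (Fin n) → ℝ := hb.aestronglyMeasurable.mk b with hg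
  have hgm : StronglyMeasurable g := hb.aestronglyMeasurable.stronglyMeasurable_mk
  have hgb : g =ᵐ[volume] b := (hb.aestronglyMeasurable.ae_eq_mk).symm
  -- the key pairing estimate
  have pair : ∀ (x₀ : EuclideanSpace ℝ (Fin n)) (r : ℝ), 0 < r →
      ∀ f : EuclideanSpace ℝ (Fin n) → ℝ, Measurable f → (∀ x, |f x| ≤ 1) →
      (r < 1 → ∫ x in Metric.ball x₀ r, f x = 0) →
      |∫ x in Metric.ball x₀ r, f x * b x| ≤
        (volume (Metric.ball x₀ r)).toReal * min Cb (Cb * Real.log 2 / Real.log (1 + r⁻¹)) := by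
    intro x₀ r hr f hfm hf1 hf0
    set B := Metric.ball x₀ r with hB
    set V : ℝ := (volume B).toReal with hV
    have hVpos : 0 < V := by
      refine ENNReal.toReal_pos (ne_of_gt (measure_ball_pos _ _ hr)) (ne_of_lt measure_ball_lt_top)
    set a : EuclideanSpace ℝ (Fin n) → ℝ := B.indicator (fun x => f x / V) with ha
    have hasupp : Function.support a ⊆ B := by
      intro x hx
      by_contra hxB
      exact hx (by rw [ha, Set.indicator_of_notMem hxB])
    have habd : ∀ x, |a x| ≤ V⁻¹ := by
      intro x
      by_cases hx : x ∈ B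
      · rw [ha, Set.indicator_of_mem hx]
        rw [abs_div, abs_of_pos hVpos]
        rw [div_le_iff₀ hVpos, inv_mul_cancel₀ (ne_of_gt hVpos)]
        exact hf1 x
      · rw [ha, Set.indicator_of_notMem hx]
        simp [inv_nonneg.2 hVpos.le]
    have haint : Integrable a volume := by
      rw [ha, integrable_indicator_iff measurableSet_ball]
      have hc : IntegrableOn (fun _ => V⁻¹) B volume :=
        integrableOn_const measure_ball_lt_top.ne
      refine hc.mono' ((hfm.div_const V).aestronglyMeasurable) ?_
      filter_upwards with x
      rw [Real.norm_eq_abs, abs_div, abs_of_pos hVpos, div_le_iff₀ hVpos,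
        inv_mul_cancel₀ (ne_of_gt hVpos)]
      exact hf1 x
    have ha0 : r < 1 → (∫ x, a x) = 0 := by
      intro hr1
      rw [ha, integral_indicator measurableSet_ball, integral_div, hf0 hr1, zero_div]
    have hab : (∫ x, a x * b x) = V⁻¹ * ∫ x in B, f x * b x := by
      have : ∀ x, a x * b x = B.indicator (fun x => V⁻¹ * (f x * b x)) x := by
        intro x
        by_cases hx : x ∈ B
        · rw [ha, Set.indicator_of_mem hx, Set.indicator_of_mem hx,
            div_mul_eq_mul_div, inv_mul_eq_div]
        · rw [ha, Set.indicator_of_notMem hx, Set.indicator_of_notMem hx, zero_mul]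
      rw [funext this, integral_indicator measurableSet_ball, integral_const_mul]
    have := H x₀ r a hr hasupp habd haint ha0
    rw [hab, abs_mul, abs_of_pos (inv_pos.2 hVpos)] at this
    calc |∫ x in B, f x * b x| = V * (V⁻¹ * |∫ x in B, f x * b x|) := by
          field_simp
      _ ≤ V * min Cb (Cb * Real.log 2 / Real.log (1 + r⁻¹)) :=
          mul_le_mul_of_nonneg_left this hVpos.le
  refine ⟨2 * Real.log 2, hC'pos, ?_, ?_⟩
  · -- small balls
    intro x₀ r hr hr1
    set B := Metric.ball x₀ r with hB
    set V : ℝ := (volume B).toReal with hV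
    have hVpos : 0 < V := by
      refine ENNReal.toReal_pos (ne_of_gt (measure_ball_pos _ _ hr)) (ne_of_lt measure_ball_lt_top)
    set m : ℝ := ⨍ y in B, b y with hm
    have hbB : IntegrableOn b B volume :=
      (hb.integrableOn_isCompact (isCompact_closedBall x₀ r)).mono_set ball_subset_closedBall
    have hmV : m = V⁻¹ * ∫ y in B, b y := by
      rw [hm, setAverage_eq, smul_eq_mul, hV, measureReal_def]
    set s : EuclideanSpace ℝ (Fin n) → ℝ := fun x => if 0 ≤ g x - m then 1 else -1 with hs
    have hsm : Measurable s := by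
      refine Measurable.ite ?_ measurable_const measurable_const
      exact measurableSet_le measurable_const ((hgm.measurable).sub measurable_const)
    have hs1 : ∀ x, |s x| ≤ 1 := by
      intro x; rw [hs]; dsimp only; split <;> simp
    have hsint : IntegrableOn s B volume := by
      have hc : IntegrableOn (fun _ => (1:ℝ)) B volume :=
        integrableOn_const measure_ball_lt_top.ne
      refine hc.mono' hsm.aestronglyMeasurable ?_
      filter_upwards with x using (by rw [Real.norm_eq_abs]; exact hs1 x)
    set I : ℝ := ∫ x in B, s x with hI
    have hIle : |I| ≤ V := by
      have := norm_setIntegral_le_of_norm_le_const (μ := volume) (s := B) (f := s) (C := 1)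
        measure_ball_lt_top (fun x _ => by rw [Real.norm_eq_abs]; exact hs1 x)
      rwa [Real.norm_eq_abs, one_mul, measureReal_def] at this
    set f : EuclideanSpace ℝ (Fin n) → ℝ := fun x => (s x - I / V) / 2 with hf
    have hfm : Measurable f := ((hsm.sub measurable_const).div_const 2)
    have hf1 : ∀ x, |f x| ≤ 1 := by
      intro x
      rw [hf]
      have h1 : |I / V| ≤ 1 := by
        rw [abs_div, abs_of_pos hVpos, div_le_one hVpos]; exact hIle
      have := abs_sub (s x) (I / V)
      calc |(s x - I / V) / 2| = |s x - I / V| / 2 := by rw [abs_div]; norm_num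
        _ ≤ (|s x| + |I / V|) / 2 := by linarith [abs_sub (s x) (I / V)]
        _ ≤ 1 := by linarith [hs1 x]
    have hfint : IntegrableOn f B volume := (hsint.sub (integrableOn_const
      measure_ball_lt_top.ne)).div_const 2
    have hf0 : ∫ x in B, f x = 0 := by
      rw [hf]
      rw [integral_div, integral_sub hsint (integrableOn_const measure_ball_lt_top.ne)]
      rw [setIntegral_const, smul_eq_mul, ← hI, measureReal_def, ← hV]
      field_simp
      ring
    -- the main identity : ∫_B f·b = (1/2) ∫_B |b - m|
    have hbm : IntegrableOn (fun x => b x - m) B volume :=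
      hbB.sub (integrableOn_const measure_ball_lt_top.ne)
    have hsbm : IntegrableOn (fun x => s x * (b x - m)) B volume := by
      refine hbm.abs.mono' (hsm.aestronglyMeasurable.mul hbm.aestronglyMeasurable) ?_
      filter_upwards with x
      rw [Real.norm_eq_abs, abs_mul]
      exact mul_le_of_le_one_left (abs_nonneg _) (hs1 x)
    have hint_bm : ∫ x in B, (b x - m) = 0 := by
      rw [integral_sub hbB (integrableOn_const measure_ball_lt_top.ne),
        setIntegral_const, smul_eq_mul, measureReal_def, ← hV, hmV]
      field_simp
      ring
    have hsabs : ∫ x in B, s x * (b x - m) = ∫ x in B, |b x - m| := by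
      refine integral_congr_ae ?_
      have : g =ᵐ[volume.restrict B] b := ae_restrict_of_ae hgb
      filter_upwards [this] with x hx
      rw [hs]
      dsimp only
      rw [hx]
      split <;> rename_i h
      · rw [one_mul, abs_of_nonneg h]
      · rw [neg_one_mul, abs_of_neg (lt_of_not_ge h)]
    have hfb : ∫ x in B, f x * b x = (∫ x in B, |b x - m|) / 2 := by
      have e1 : ∀ x, f x * b x = (s x * (b x - m) / 2 - I / V / 2 * (b x - m))
          + f x * m := by
        intro x; rw [hf]; ring
      have int1 : IntegrableOn (fun x => s x * (b x - m) / 2) B volume := by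
        exact hsbm.div_const 2
      have int2 : IntegrableOn (fun x => I / V / 2 * (b x - m)) B volume := by
        exact hbm.const_mul _
      have int12 : IntegrableOn
          (fun x => s x * (b x - m) / 2 - I / V / 2 * (b x - m)) B volume := by
        exact int1.sub int2
      have int3 : IntegrableOn (fun x => f x * m) B volume := by
        exact hfint.mul_const m
      rw [funext e1, integral_add int12 int3, integral_sub int1 int2,
        integral_div, integral_const_mul, integral_mul_const, hint_bm, hf0, hsabs]
      ring
    have hkey := pair x₀ r hr f hfm hf1 (fun _ => hf0)
    rw [hfb] at hkey
    have habs : 0 ≤ ∫ x in B, |b x - m| := integral_nonneg (fun x => abs_nonneg _)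
    have hL : Real.log 2 < Real.log (1 + r⁻¹) := by
      apply Real.log_lt_log (by norm_num)
      have : 1 < r⁻¹ := (one_lt_inv₀ hr).2 hr1
      linarith
    have hLpos : 0 < Real.log (1 + r⁻¹) := lt_trans hlog2 hL
    have h2 : (∫ x in B, |b x - m|) / 2 ≤ V * (Cb * Real.log 2 / Real.log (1 + r⁻¹)) := by
      calc (∫ x in B, |b x - m|) / 2 ≤ |(∫ x in B, |b x - m|) / 2| := le_abs_self _
        _ ≤ V * min Cb (Cb * Real.log 2 / Real.log (1 + r⁻¹)) := hkey
        _ ≤ V * (Cb * Real.log 2 / Real.log (1 + r⁻¹)) :=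
            mul_le_mul_of_nonneg_left (min_le_right _ _) hVpos.le
    have havg : ⨍ x in B, |b x - m| = V⁻¹ * ∫ x in B, |b x - m| := by
      rw [setAverage_eq, smul_eq_mul, hV, measureReal_def]
    rw [havg]
    have : V⁻¹ * ∫ x in B, |b x - m| ≤ 2 * (Cb * Real.log 2 / Real.log (1 + r⁻¹)) := by
      rw [inv_mul_le_iff₀ hVpos]
      calc (∫ x in B, |b x - m|) = 2 * ((∫ x in B, |b x - m|) / 2) := by ring
        _ ≤ 2 * (V * (Cb * Real.log 2 / Real.log (1 + r⁻¹))) := by linarith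
        _ = V * (2 * (Cb * Real.log 2 / Real.log (1 + r⁻¹))) := by ring
    calc Real.log (1 + r⁻¹) * (V⁻¹ * ∫ x in B, |b x - m|)
        ≤ Real.log (1 + r⁻¹) * (2 * (Cb * Real.log 2 / Real.log (1 + r⁻¹))) :=
          mul_le_mul_of_nonneg_left this hLpos.le
      _ = 2 * (Cb * Real.log 2 / Real.log (1 + r⁻¹) * Real.log (1 + r⁻¹)) := by ring
      _ = 2 * (Cb * Real.log 2) := by rw [div_mul_cancel₀ _ (ne_of_gt hLpos)]
      _ = 2 * Real.log 2 * Cb := by ring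
  · -- big balls
    intro x₀ r hr
    have hr0 : (0:ℝ) < r := lt_of_lt_of_le one_pos hr
    set B := Metric.ball x₀ r with hB
    set V : ℝ := (volume B).toReal with hV
    have hVpos : 0 < V := by
      refine ENNReal.toReal_pos (ne_of_gt (measure_ball_pos _ _ hr0)) (ne_of_lt measure_ball_lt_top)
    set f : EuclideanSpace ℝ (Fin n) → ℝ := fun x => if 0 ≤ g x then 1 else -1 with hf
    have hfm : Measurable f := by
      refine Measurable.ite ?_ measurable_const measurable_const
      exact measurableSet_le measurable_const hgm.measurable
    have hf1 : ∀ x, |f x| ≤ 1 := by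
      intro x; rw [hf]; dsimp only; split <;> simp
    have hkey := pair x₀ r hr0 f hfm hf1 (fun h => absurd h (not_lt.2 hr))
    have hfb : ∫ x in B, f x * b x = ∫ x in B, |b x| := by
      refine integral_congr_ae ?_
      filter_upwards [ae_restrict_of_ae hgb] with x hx
      rw [hf]
      dsimp only
      rw [hx]
      split <;> rename_i h
      · rw [one_mul, abs_of_nonneg h]
      · rw [neg_one_mul, abs_of_neg (lt_of_not_ge h)]
    rw [hfb] at hkey
    have h1 : ∫ x in B, |b x| ≤ V * Cb := by
      calc ∫ x in B, |b x| ≤ |(∫ x in B, |b x|)| := le_abs_self _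
        _ ≤ V * min Cb (Cb * Real.log 2 / Real.log (1 + r⁻¹)) := hkey
        _ ≤ V * Cb := mul_le_mul_of_nonneg_left (min_le_left _ _) hVpos.le
    have havg : ⨍ x in B, |b x| = V⁻¹ * ∫ x in B, |b x| := by
      rw [setAverage_eq, smul_eq_mul, hV, measureReal_def]
    rw [havg, inv_mul_le_iff₀ hVpos]
    calc (∫ x in B, |b x|) ≤ V * Cb := h1
      _ ≤ V * (2 * Real.log 2 * Cb) := by
          refine mul_le_mul_of_nonneg_left ?_ hVpos.le
          nlinarith
end

section
/- Let b ∈ bmo(ℝⁿ) and let B = B(x₀,r) with r < 1. Let a be supported in B with ∫ a = 0, ∫|a| ≤ 1, ∫ |a(y)||b(y)−b_B| dy ≤ ‖b‖_{bmo,2}, and |∫ ab| ≤ C_b/log(1+r^{-1}) with C_b = ‖b‖_{bmo,2}. Then for every x with |x−x₀| > 2r and every C¹ function φ supported in a ball B(x,t) with 0 < t < 1, ‖φ‖_{L∞} ≤ |B(x,t)|^{-1}, ‖∇φ‖_{L∞} ≤ [t|B(x,t)|]^{-1}, one has |∫ (b(x)−b(y)) a(y) φ(y) dy| ≤ C ( |b(x)−b_B|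 r / |x−x₀|^{n+1} + r‖b‖_{bmo,2}/|x−x₀|^{n+1} + C_b/(|x−x₀|ⁿ log(1+r^{-1})) ), with C depending only on n. -/
open MeasureTheory Metric Real Set

/-- the pointwise estimate, away from the double ball, of the commutator
pairing `∫ (b(x)−b(y)) a(y) φ(y) dy` against normalized C¹ test functions. -/
theorem pointwise_commutator_estimate (n : ℕ) :
    ∃ C > (0 : ℝ), ∀ (b : EuclideanSpace ℝ (Fin n) → ℝ) (Nb : ℝ),
      LocallyIntegrable b volume →
      ∀ (a : EuclideanSpace ℝ (Fin n) → ℝ) (x₀ : EuclideanSpace ℝ (Fin n)) (r : ℝ),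
        0 < r → r < 1 →
        Function.support a ⊆ Metric.ball x₀ r → Integrable a volume →
        Integrable (fun y => a y * b y) volume →
        (∫ y, a y) = 0 → (∫ y, |a y|) ≤ 1 →
        (∫ y, |a y| * |b y - ⨍ z in Metric.ball x₀ r, b z|) ≤ Nb →
        |∫ y, a y * b y| ≤ Nb / Real.log (1 + r⁻¹) →
        ∀ x : EuclideanSpace ℝ (Fin n), 2 * r < ‖x - x₀‖ →
        ∀ (t : ℝ) (φ : EuclideanSpace ℝ (Fin n) → ℝ), 0 < t → t < 1 →
          ContDiff ℝ 1 φ → Function.support φ ⊆ Metric.ball x t →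
          (∀ y, |φ y| ≤ ((volume (Metric.ball x t)).toReal)⁻¹) →
          (∀ y, ‖fderiv ℝ φ y‖ ≤ (t * (volume (Metric.ball x t)).toReal)⁻¹) →
          |∫ y, (b x - b y) * a y * φ y| ≤
            C * (|b x - ⨍ z in Metric.ball x₀ r, b z| * r / ‖x - x₀‖ ^ (n + 1)
              + r * Nb / ‖x - x₀‖ ^ (n + 1)
              + Nb / (‖x - x₀‖ ^ n * Real.log (1 + r⁻¹))) := by
  classical
  set v : ℝ := (volume (Metric.ball (0 : EuclideanSpace ℝ (Fin n)) 1)).toReal with hvdef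
  have hv0 : 0 < v := by
    apply ENNReal.toReal_pos
    · exact (measure_ball_pos volume _ one_pos).ne'
    · exact measure_ball_lt_top.ne
  have hv0' : (0:ℝ) < 2 ^ (n + 1) / v := div_pos (by positivity) hv0
  clear_value v
  refine ⟨2 ^ (n + 1) / v, hv0', ?_⟩
  intro b Nb hb a x₀ r hr hr1 ha_supp ha_int hab_int ha0 ha1 habm hablog x hx t φ ht ht1
    hφC1 hφ_supp hφ_bd hφ'_bd
  set d : ℝ := ‖x - x₀‖ with hddef
  have hd : 0 < d := lt_trans (by linarith) hx
  set m : ℝ := ⨍ z in Metric.ball x₀ r, b z with hmdef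
  have hNb : 0 ≤ Nb := le_trans (integral_nonneg fun y => by positivity) habm
  clear_value d m
  have hlog : 0 < Real.log (1 + r⁻¹) := Real.log_pos (by nlinarith [inv_pos.2 hr])
  set lg : ℝ := Real.log (1 + r⁻¹) with hlg
  clear_value lg
  have hRHS0 : 0 ≤ |b x - m| * r / d ^ (n + 1) + r * Nb / d ^ (n + 1)
      + Nb / (d ^ n * lg) := by
    have h1 : 0 ≤ |b x - m| * r / d ^ (n + 1) :=
      div_nonneg (mul_nonneg (abs_nonneg _) hr.le) (pow_nonneg hd.le _)
    have h2 : 0 ≤ r * Nb / d ^ (n + 1) :=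
      div_nonneg (mul_nonneg hr.le hNb) (pow_nonneg hd.le _)
    have h3 : 0 ≤ Nb / (d ^ n * lg) :=
      div_nonneg hNb (mul_nonneg (pow_nonneg hd.le _) hlog.le)
    linarith
  by_cases hcase : ∀ y, a y * φ y = 0
  · have hz : ∀ y, (b x - b y) * a y * φ y = 0 := fun y => by
      rw [mul_assoc, hcase y, mul_zero]
    simp only [hz, integral_zero, abs_zero]
    exact mul_nonneg hv0'.le hRHS0
  · push_neg at hcase
    obtain ⟨y₀, hy₀⟩ := hcase
    have hay₀ : a y₀ ≠ 0 := fun h => hy₀ (by rw [h, zero_mul])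
    have hφy₀ : φ y₀ ≠ 0 := fun h => hy₀ (by rw [h, mul_zero])
    have hy₀B : y₀ ∈ Metric.ball x₀ r := ha_supp hay₀
    have hy₀B' : y₀ ∈ Metric.ball x t := hφ_supp hφy₀
    -- t > d / 2
    have htd : d / 2 < t := by
      have h1 : dist y₀ x₀ < r := mem_ball.mp hy₀B
      have h2 : dist y₀ x < t := mem_ball.mp hy₀B'
      have h3 : d ≤ dist y₀ x + dist y₀ x₀ := by
        rw [hddef, ← dist_eq_norm]
        calc dist x x₀ ≤ dist x y₀ + dist y₀ x₀ := dist_triangle _ _ _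
          _ = dist y₀ x + dist y₀ x₀ := by rw [dist_comm]
      linarith
    set V : ℝ := (volume (Metric.ball x t)).toReal with hVdef
    have hVval : V = t ^ n * v := by
      rw [hVdef, Measure.addHaar_ball_of_pos volume x ht, ENNReal.toReal_mul,
        ENNReal.toReal_ofReal (by positivity), finrank_euclideanSpace_fin, ← hvdef]
    have hV0 : 0 < V := by
      rw [hVval]; exact mul_pos (pow_pos ht n) hv0
    set L : ℝ := (t * V)⁻¹ with hLdef
    have hL0 : 0 < L := inv_pos.2 (mul_pos ht hV0)
    clear_value V L
    have hφcont : Continuous φ := hφC1.continuous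
    -- mean value estimate on the small ball of the `a` side
    have hmvt : ∀ y ∈ Metric.ball x₀ r, |φ y - φ x₀| ≤ L * r := by
      intro y hy
      have hdiff : ∀ z ∈ (Set.univ : Set (EuclideanSpace ℝ (Fin n))),
          DifferentiableAt ℝ φ z := fun z _ => (hφC1.differentiable one_ne_zero) z
      have hbd : ∀ z ∈ (Set.univ : Set (EuclideanSpace ℝ (Fin n))),
          ‖fderiv ℝ φ z‖ ≤ L := fun z _ => hφ'_bd z
      have h := convex_univ.norm_image_sub_le_of_norm_fderiv_le hdiff hbd
        (Set.mem_univ x₀) (Set.mem_univ y)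
      have hyr : ‖y - x₀‖ ≤ r := by
        have := mem_ball.mp hy
        rw [dist_eq_norm] at this
        linarith
      calc |φ y - φ x₀| = ‖φ y - φ x₀‖ := (Real.norm_eq_abs _).symm
        _ ≤ L * ‖y - x₀‖ := h
        _ ≤ L * r := mul_le_mul_of_nonneg_left hyr hL0.le
    -- integrability facts
    have i1 : Integrable (fun y => a y * (φ y - φ x₀)) volume := by
      have : Integrable (fun y => (φ y - φ x₀) * a y) volume :=
        ha_int.bdd_mul ((hφcont.sub continuous_const).aestronglyMeasurable)
          (c := V⁻¹ + V⁻¹) (Filter.Eventually.of_forall fun y => le_trans (norm_sub_le _ _) (by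
            have h1 := hφ_bd y; have h2 := hφ_bd x₀
            simp only [Real.norm_eq_abs]; exact add_le_add h1 h2))
      exact this.congr (Filter.Eventually.of_forall fun y => by ring)
    have iab' : Integrable (fun y => (m - b y) * a y) volume := by
      have : Integrable (fun y => m * a y - a y * b y) volume :=
        (ha_int.const_mul m).sub hab_int
      exact this.congr (Filter.Eventually.of_forall fun y => by ring)
    have i2 : Integrable (fun y => (m - b y) * a y * (φ y - φ x₀)) volume := by
      have h : Integrable (fun y => (φ y - φ x₀) * ((m - b y) * a y)) volume :=
        iab'.bdd_mul ((hφcont.sub continuous_const).aestronglyMeasurable)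
          (c := V⁻¹ + V⁻¹) (Filter.Eventually.of_forall fun y => le_trans (norm_sub_le _ _) (by
            have h1 := hφ_bd y; have h2 := hφ_bd x₀
            simp only [Real.norm_eq_abs]; exact add_le_add h1 h2))
      exact h.congr (Filter.Eventually.of_forall fun y => by ring)
    have iabs : Integrable (fun y => |a y| * |b y - m|) volume := by
      have h : Integrable (fun y => |a y * b y - a y * m|) volume :=
        (hab_int.sub (ha_int.mul_const m)).abs
      exact h.congr (Filter.Eventually.of_forall fun y => by
        dsimp only; rw [← abs_mul, mul_sub])
    -- the key algebraic decomposition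
    have hIeq : (∫ y, (b x - b y) * a y * φ y)
        = (b x - m) * (∫ y, a y * (φ y - φ x₀))
          + (∫ y, (m - b y) * a y * (φ y - φ x₀))
          - φ x₀ * (∫ y, a y * b y) := by
      have i1' : Integrable (fun y => (b x - m) * (a y * (φ y - φ x₀))) volume :=
        i1.const_mul (b x - m)
      have i3 : Integrable (fun y => ((b x - m) * φ x₀ + φ x₀ * m) * a y) volume :=
        ha_int.const_mul ((b x - m) * φ x₀ + φ x₀ * m)
      have i4 : Integrable (fun y => φ x₀ * (a y * b y)) volume :=
        hab_int.const_mul (φ x₀)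
      have i34 : Integrable (fun y => ((b x - m) * φ x₀ + φ x₀ * m) * a y
          - φ x₀ * (a y * b y)) volume := i3.sub i4
      calc ∫ y, (b x - b y) * a y * φ y
          = ∫ y, ((b x - m) * (a y * (φ y - φ x₀))
              + ((m - b y) * a y * (φ y - φ x₀)
              + (((b x - m) * φ x₀ + φ x₀ * m) * a y
              - φ x₀ * (a y * b y)))) :=
            integral_congr_ae (Filter.Eventually.of_forall fun y => by ring)
        _ = (∫ y, (b x - m) * (a y * (φ y - φ x₀)))
              + ∫ y, ((m - b y) * a y * (φ y - φ x₀)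
                + (((b x - m) * φ x₀ + φ x₀ * m) * a y - φ x₀ * (a y * b y))) :=
            integral_add i1' (i2.add i34)
        _ = (∫ y, (b x - m) * (a y * (φ y - φ x₀)))
              + ((∫ y, (m - b y) * a y * (φ y - φ x₀))
                + ∫ y, (((b x - m) * φ x₀ + φ x₀ * m) * a y - φ x₀ * (a y * b y))) := by
            rw [integral_add i2 i34]
        _ = (∫ y, (b x - m) * (a y * (φ y - φ x₀)))
              + ((∫ y, (m - b y) * a y * (φ y - φ x₀))
                + ((∫ y, ((b x - m) * φ x₀ + φ x₀ * m) * a y)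
                  - ∫ y, φ x₀ * (a y * b y))) := by
            rw [integral_sub i3 i4]
        _ = (b x - m) * (∫ y, a y * (φ y - φ x₀))
              + (∫ y, (m - b y) * a y * (φ y - φ x₀))
              - φ x₀ * (∫ y, a y * b y) := by
            rw [integral_const_mul, integral_const_mul, integral_const_mul, ha0, mul_zero]
            ring
    -- bound the first integral
    have habsle : ∀ (f : EuclideanSpace ℝ (Fin n) → ℝ),
        |∫ y, f y| ≤ ∫ y, |f y| := fun f => by
      simpa [Real.norm_eq_abs] using norm_integral_le_integral_norm f (μ := volume)
    have hJ : |∫ y, a y * (φ y - φ x₀)| ≤ L * r := by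
      calc |∫ y, a y * (φ y - φ x₀)| ≤ ∫ y, |a y * (φ y - φ x₀)| := habsle _
        _ ≤ ∫ y, (L * r) * |a y| := by
            refine integral_mono i1.abs (ha_int.abs.const_mul _) fun y => ?_
            rcases eq_or_ne (a y) 0 with h | h
            · simp [h]
            · have hy := ha_supp h
              rw [abs_mul]
              have h2 := hmvt y hy
              calc |a y| * |φ y - φ x₀| ≤ |a y| * (L * r) :=
                    mul_le_mul_of_nonneg_left h2 (abs_nonneg _)
                _ = (L * r) * |a y| := mul_comm _ _
        _ = (L * r) * ∫ y, |a y| := integral_const_mul _ _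
        _ ≤ (L * r) * 1 := mul_le_mul_of_nonneg_left ha1 (mul_nonneg hL0.le hr.le)
        _ = L * r := mul_one _
    have hK : |∫ y, (m - b y) * a y * (φ y - φ x₀)| ≤ L * r * Nb := by
      calc |∫ y, (m - b y) * a y * (φ y - φ x₀)|
          ≤ ∫ y, |(m - b y) * a y * (φ y - φ x₀)| := habsle _
        _ ≤ ∫ y, (L * r) * (|a y| * |b y - m|) := by
            refine integral_mono i2.abs (iabs.const_mul _) fun y => ?_
            rcases eq_or_ne (a y) 0 with h | h
            · simp [h]
            · have hy := ha_supp h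
              have h2 := hmvt y hy
              rw [abs_mul, abs_mul, abs_sub_comm m (b y)]
              calc |b y - m| * |a y| * |φ y - φ x₀|
                  ≤ |b y - m| * |a y| * (L * r) := mul_le_mul_of_nonneg_left h2
                    (mul_nonneg (abs_nonneg _) (abs_nonneg _))
                _ = (L * r) * (|a y| * |b y - m|) := by ring
        _ = (L * r) * ∫ y, |a y| * |b y - m| := integral_const_mul _ _
        _ ≤ (L * r) * Nb := mul_le_mul_of_nonneg_left habm (mul_nonneg hL0.le hr.le)
        _ = L * r * Nb := by ring
    have hC3 : |φ x₀| * |∫ y, a y * b y| ≤ V⁻¹ * (Nb / lg) :=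
      mul_le_mul (hφ_bd x₀) hablog (abs_nonneg _) (inv_nonneg.2 hV0.le)
    -- geometric bounds on the constants
    have hd2 : (0:ℝ) ≤ d / 2 := by linarith
    have hpow : (d / 2) ^ (n + 1) ≤ t ^ (n + 1) := pow_le_pow_left₀ hd2 htd.le _
    have hpown : (d / 2) ^ n ≤ t ^ n := pow_le_pow_left₀ hd2 htd.le _
    have hL_le : L ≤ 2 ^ (n + 1) / v / d ^ (n + 1) := by
      have h1 : L = (t ^ (n + 1) * v)⁻¹ := by rw [hLdef, hVval]; congr 1; ring
      have h2 : ((d / 2) ^ (n + 1) * v)⁻¹ = 2 ^ (n + 1) / v / d ^ (n + 1) := by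
        rw [div_pow]; field_simp
      rw [h1, ← h2]
      exact inv_anti₀
        (mul_pos (pow_pos (by linarith) _) hv0)
        (mul_le_mul_of_nonneg_right hpow hv0.le)
    have hVinv_le : V⁻¹ ≤ 2 ^ (n + 1) / v / d ^ n := by
      have h2 : ((d / 2) ^ n * v)⁻¹ = 2 ^ n / v / d ^ n := by
        rw [div_pow]; field_simp
      have h3 : V⁻¹ ≤ 2 ^ n / v / d ^ n := by
        rw [hVval, ← h2]
        exact inv_anti₀
          (mul_pos (pow_pos (by linarith) _) hv0)
          (mul_le_mul_of_nonneg_right hpown hv0.le)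
      refine h3.trans ?_
      have h4 : (2:ℝ) ^ n ≤ 2 ^ (n + 1) := pow_le_pow_right₀ one_le_two (Nat.le_succ n)
      exact (div_le_div_iff_of_pos_right (pow_pos hd _)).mpr ((div_le_div_iff_of_pos_right hv0).mpr h4)
    -- put everything together
    have htri : ∀ p q s : ℝ, |p + q - s| ≤ |p| + |q| + |s| := fun p q s => by
      have h1 := abs_add_le (p + q) (-s)
      have h2 := abs_add_le p q
      rw [abs_neg] at h1
      calc |p + q - s| = |p + q + -s| := by rw [sub_eq_add_neg]
        _ ≤ |p + q| + |s| := h1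
        _ ≤ |p| + |q| + |s| := by linarith
    calc |∫ y, (b x - b y) * a y * φ y|
        = |(b x - m) * (∫ y, a y * (φ y - φ x₀))
            + (∫ y, (m - b y) * a y * (φ y - φ x₀))
            - φ x₀ * (∫ y, a y * b y)| := by rw [hIeq]
      _ ≤ |(b x - m) * (∫ y, a y * (φ y - φ x₀))|
            + |∫ y, (m - b y) * a y * (φ y - φ x₀)|
            + |φ x₀ * (∫ y, a y * b y)| := htri _ _ _
      _ = |b x - m| * |∫ y, a y * (φ y - φ x₀)|
            + |∫ y, (m - b y) * a y * (φ y - φ x₀)|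
            + |φ x₀| * |∫ y, a y * b y| := by rw [abs_mul, abs_mul]
      _ ≤ |b x - m| * (L * r) + L * r * Nb + V⁻¹ * (Nb / lg) := by
          refine add_le_add (add_le_add ?_ hK) hC3
          exact mul_le_mul_of_nonneg_left hJ (abs_nonneg _)
      _ ≤ |b x - m| * (2 ^ (n + 1) / v / d ^ (n + 1) * r)
            + 2 ^ (n + 1) / v / d ^ (n + 1) * r * Nb
            + 2 ^ (n + 1) / v / d ^ n * (Nb / lg) := by
          refine add_le_add (add_le_add ?_ ?_) ?_
          · exact mul_le_mul_of_nonneg_left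
              (mul_le_mul_of_nonneg_right hL_le hr.le) (abs_nonneg _)
          · exact mul_le_mul_of_nonneg_right
              (mul_le_mul_of_nonneg_right hL_le hr.le) hNb
          · exact mul_le_mul_of_nonneg_right hVinv_le (div_nonneg hNb hlog.le)
      _ = 2 ^ (n + 1) / v * (|b x - m| * r / d ^ (n + 1) + r * Nb / d ^ (n + 1)
            + Nb / (d ^ n * lg)) := by
          field_simp [hv0.ne', hd.ne', hlog.ne']
end
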